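/- arXiv:1701.03847 — 12 statements merged into one kernel-verified Lean document; each statement's English description precedes it below -/
import Mathlib

section
/- If f(z) = h(z) - conj(z) with h analytic has an isolated zero at z0 that is sense-reversing (i.e., |h'(z0)| < 1), then the Poincaré index of f at z0 equals -1. -/
open Complex Set

/-- `WindingOn f z0 r m` : the winding of `f` along the positively oriented circle of
radius `r` centered at `z0` equals `m`, expressed via a continuous branch of the argument. -/
def WindingOn (f : ℂ → ℂ) (z0 : ℂ) (r : ℝ) (m : ℤ) : Prop :=
  ∃ θ : ℝ → ℝ, ContinuousOn θ (Set.Icc 0 (2 * Real.pi)) ∧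
    (∀ t ∈ Set.Icc 0 (2 * Real.pi),
      f (z0 + r * Complex.exp (Complex.I * t)) =
        (‖f (z0 + r * Complex.exp (Complex.I * t))‖ : ℂ) *
          Complex.exp (Complex.I * (θ t : ℝ))) ∧
    θ (2 * Real.pi) - θ 0 = 2 * Real.pi * m

/-- The Poincaré index of `f` at `z0` is `m`: the winding along all sufficiently
small circles around `z0` equals `m`. -/
def HasIndex (f : ℂ → ℂ) (z0 : ℂ) (m : ℤ) : Prop :=
  ∃ r0 > 0, ∀ r : ℝ, 0 < r → r < r0 → WindingOn f z0 r m

/-!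
On the circle `z = z₀ + r e^{it}` we have `conj z = conj z₀ + r e^{-it}`, so when `h z₀ = conj z₀`,
`h z - conj z = -e^{-it} (r - (h z - h z₀) e^{it})`.
Since `|h'(z₀)| < 1`, for small `r` the second factor stays in the open disk of radius `r` about `r`, hence in
the right half-plane, and contributes no winding: the index is that of `-e^{-it}`, namely `-1`.
-/

open Metric Filter Topology ComplexConjugate
open scoped Real

lemma windingOn_of_eq_exp_mul {f : ℂ → ℂ} {z0 : ℂ} {r : ℝ} {m : ℤ} {φ : ℝ → ℝ} {q : ℝ → ℂ}
    (hφ : ContinuousOn φ (Icc 0 (2 * π))) (hq : ContinuousOn q (Icc 0 (2 * π)))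
    (hq_slit : ∀ t ∈ Icc 0 (2 * π), q t ∈ slitPlane)
    (hfq : ∀ t ∈ Icc 0 (2 * π), f (circleMap z0 r t) = exp (φ t * I) * q t)
    (hq_per : q (2 * π) = q 0) (hφ_per : φ (2 * π) - φ 0 = 2 * π * m) :
    WindingOn f z0 r m := by
  refine ⟨fun t ↦ φ t + arg (q t),
    hφ.add fun t ht ↦ (continuousAt_arg (hq_slit t ht)).comp_continuousWithinAt (hq t ht),
    fun t ht ↦ ?_, by simp only [hq_per]; linarith⟩
  have hfq_t := hfq t ht
  rw [circleMap, mul_comm (t : ℂ)] at hfq_t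
  rw [hfq_t, norm_mul, norm_exp_ofReal_mul_I, one_mul]
  conv_lhs => rw [← norm_mul_exp_arg_mul_I (q t)]
  push_cast
  rw [mul_comm I, add_mul, exp_add]
  ring

lemma sub_conj_circleMap (a z0 : ℂ) (r t : ℝ) :
    a - conj (circleMap z0 r t) = exp ((π - t : ℝ) * I) * (r - (a - conj z0) * exp (t * I)) := by
  have h_exp : exp ((π - t : ℝ) * I) = -exp (-(t * I)) := by
    rw [show ((π - t : ℝ) : ℂ) * I = π * I + -(t * I) by push_cast; ring, exp_add, exp_pi_mul_I,
      neg_one_mul]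
  have h_inv : exp (-(t * I)) * exp (t * I) = 1 := by rw [← exp_add, neg_add_cancel, exp_zero]
  rw [conj_circleMap, circleMap, h_exp, ofReal_neg, neg_mul]
  linear_combination -(a - conj z0) * h_inv

lemma HasDerivAt.eventually_norm_sub_le {𝕜 F : Type*} [NontriviallyNormedField 𝕜]
    [NormedAddCommGroup F] [NormedSpace 𝕜 F] {f : 𝕜 → F} {f' : F} {x : 𝕜} {K : ℝ}
    (hf : HasDerivAt f f' x) (hK : ‖f'‖ < K) :
    ∀ᶠ y in 𝓝 x, ‖f y - f x‖ ≤ K * ‖y - x‖ := by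
  filter_upwards [(hasDerivAt_iff_isLittleO.1 hf).def (sub_pos.2 hK)] with y hy
  calc ‖f y - f x‖ = ‖(f y - f x - (y - x) • f') + (y - x) • f'‖ := by rw [sub_add_cancel]
    _ ≤ ‖f y - f x - (y - x) • f'‖ + ‖(y - x) • f'‖ := norm_add_le _ _
    _ ≤ (K - ‖f'‖) * ‖y - x‖ + ‖y - x‖ * ‖f'‖ := by rw [norm_smul]; linarith
    _ = K * ‖y - x‖ := by ring

lemma windingOn_sub_conj_neg_one {h : ℂ → ℂ} {z0 : ℂ} {r K : ℝ} (hr : 0 < r) (hK : K < 1)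
    (hz : h z0 = conj z0) (hcont : ContinuousOn h (sphere z0 r))
    (hcontract : ∀ z ∈ sphere z0 r, ‖h z - h z0‖ ≤ K * ‖z - z0‖) :
    WindingOn (fun z ↦ h z - conj z) z0 r (-1) := by
  set q : ℝ → ℂ := fun t ↦ r - (h (circleMap z0 r t) - h z0) * exp (t * I)
  have hq : Continuous q := by
    have := hcont.comp_continuous (continuous_circleMap z0 r) (circleMap_mem_sphere z0 hr.le)
    exact continuous_const.sub ((this.sub continuous_const).mul (by fun_prop))
  have hq_re : ∀ t, 0 < (q t).re := by
    intro t
    have h_small : ‖(h (circleMap z0 r t) - h z0) * exp (t * I)‖ < r := by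
      have := hcontract _ (circleMap_mem_sphere z0 hr.le t)
      rw [circleMap_sub_center, norm_circleMap_zero, abs_of_pos hr] at this
      rw [norm_mul, norm_exp_ofReal_mul_I, mul_one]
      nlinarith
    have := re_le_norm ((h (circleMap z0 r t) - h z0) * exp (t * I))
    simp only [q, sub_re, ofReal_re]
    linarith
  refine windingOn_of_eq_exp_mul (φ := fun t ↦ π - t) (q := q) (by fun_prop) hq.continuousOn
    (fun t _ ↦ mem_slitPlane_iff.2 (Or.inl (hq_re t))) (fun t _ ↦ ?_) ?_ (by push_cast; ring)
  · rw [sub_conj_circleMap, ← hz]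
  · simp only [q, (periodic_circleMap z0 r).eq, ofReal_zero, zero_mul, exp_zero]
    rw [show ((2 * π : ℝ) : ℂ) * I = 2 * π * I by push_cast; ring, exp_two_pi_mul_I]

theorem index_sense_reversing_general (h f : ℂ → ℂ) (z0 : ℂ)
    (hh : AnalyticAt ℂ h z0)
    (hf : ∀ z, f z = h z - (starRingEnd ℂ) z)
    (hz : f z0 = 0)
    (hsr : ‖deriv h z0‖ < 1) :
    HasIndex f z0 (-1) := by
  obtain rfl : f = fun z ↦ h z - conj z := funext hf
  obtain ⟨K, hK_deriv, hK_one⟩ := exists_between hsr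
  obtain ⟨r0, hr0, hball⟩ := eventually_nhds_iff_ball.1
    ((hh.differentiableAt.hasDerivAt.eventually_norm_sub_le hK_deriv).and hh.eventually_analyticAt)
  refine ⟨r0, hr0, fun r hr hr_lt ↦ windingOn_sub_conj_neg_one hr hK_one (sub_eq_zero.1 hz)
    (fun z hz_mem ↦ ?_) (fun z hz_mem ↦ (hball z (sphere_subset_ball hr_lt hz_mem)).1)⟩
  exact (hball z (sphere_subset_ball hr_lt hz_mem)).2.continuousAt.continuousWithinAt

theorem index_sense_reversing (h f : ℂ → ℂ) (z0 : ℂ)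
    (hh : AnalyticAt ℂ h z0)
    (hf : ∀ z, f z = h z - (starRingEnd ℂ) z)
    (hz : f z0 = 0)
    (hiso : ∀ᶠ z in nhdsWithin z0 {z0}ᶜ, f z ≠ 0)
    (hsr : ‖deriv h z0‖ < 1) :
    HasIndex f z0 (-1) :=
  index_sense_reversing_general h f z0 hh hf hz hsr
end

section
/- If f(z) = h(z) - conj(z) with h analytic has an isolated zero at z0 that is sense-preserving (i.e., |h'(z0)| > 1), then the Poincaré index of f at z0 equals +1. -/
open Complex Set

/-!
Write `a = h'(z0)`. Since `h(z0) = conj z0`,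
`f z - a (z - z0) = (h z - h z0 - a (z - z0)) - conj (z - z0)`, whose modulus is
`o(|z - z0|) + |z - z0| < |a| |z - z0|` near `z0` because `|a| > 1`. So on small circles
`f` is a perturbation of the linear map `z ↦ a (z - z0)` strictly smaller than that map.
The quotient of `f` by the linear map then stays in the right half-plane, where `arg` is a
continuous branch, so it does not wind, and `f` winds exactly as the linear map: once.
-/

open Metric Filter Topology ComplexConjugate

lemma add_mul_exp_I_mul_eq_circleMap (z0 : ℂ) (r t : ℝ) :
    z0 + r * exp (I * t) = circleMap z0 r t := by
  rw [circleMap, mul_comm I]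

namespace WindingOn

variable {f g : ℂ → ℂ} {z0 : ℂ} {r : ℝ} {m n : ℤ}

lemma congr (hf : WindingOn f z0 r m) (hfg : EqOn f g (sphere z0 |r|)) :
    WindingOn g z0 r m := by
  obtain ⟨θ, hθc, hθ, hθm⟩ := hf
  refine ⟨θ, hθc, fun t ht => ?_, hθm⟩
  have hmem := circleMap_mem_sphere' z0 r t
  rw [← add_mul_exp_I_mul_eq_circleMap] at hmem
  rw [← hfg hmem]
  exact hθ t ht

lemma mul (hf : WindingOn f z0 r m) (hg : WindingOn g z0 r n) :
    WindingOn (f * g) z0 r (m + n) := by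
  obtain ⟨θ, hθc, hθ, hθm⟩ := hf
  obtain ⟨φ, hφc, hφ, hφn⟩ := hg
  refine ⟨θ + φ, hθc.add hφc, fun t ht => ?_, ?_⟩
  · simp only [Pi.mul_apply, norm_mul, Pi.add_apply]
    conv_lhs => rw [hθ t ht, hφ t ht]
    push_cast
    rw [mul_add, exp_add]
    ring
  · simp only [Pi.add_apply]
    push_cast
    linarith

end WindingOn

lemma windingOn_const_mul_sub (a z0 : ℂ) {r : ℝ} (hr : 0 ≤ r) :
    WindingOn (fun z => a * (z - z0)) z0 r 1 := by
  refine ⟨fun t => arg a + t, by fun_prop, fun t _ => ?_, by push_cast; ring⟩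
  dsimp only
  rw [add_sub_cancel_left, norm_mul, norm_mul, norm_exp_I_mul_ofReal, norm_real,
    Real.norm_of_nonneg hr]
  conv_lhs => rw [← norm_mul_exp_arg_mul_I a]
  push_cast
  rw [mul_add, exp_add, mul_comm I (arg a : ℂ)]
  ring

lemma windingOn_zero_of_mapsTo_slitPlane {q : ℂ → ℂ} {z0 : ℂ} {r : ℝ}
    (hq : ContinuousOn q (sphere z0 |r|)) (hslit : MapsTo q (sphere z0 |r|) slitPlane) :
    WindingOn q z0 r 0 := by
  have hq_circle : Continuous (fun t => q (circleMap z0 r t)) :=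
    hq.comp_continuous (continuous_circleMap z0 r) (circleMap_mem_sphere' z0 r)
  refine ⟨fun t => arg (q (circleMap z0 r t)), ?_, fun t _ => ?_, ?_⟩
  · exact (continuousOn_arg.comp_continuous hq_circle
      fun t => hslit (circleMap_mem_sphere' z0 r t)).continuousOn
  · rw [add_mul_exp_I_mul_eq_circleMap, mul_comm I]
    exact (norm_mul_exp_arg_mul_I _).symm
  · have hperiod := periodic_circleMap z0 r 0
    rw [zero_add] at hperiod
    simp [hperiod]

/-- A winding-number form of Rouché's theorem for a linear comparison map. -/
lemma windingOn_one_of_norm_sub_lt {g : ℂ → ℂ} {z0 a : ℂ} {r : ℝ} (hr : 0 ≤ r)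
    (hg : ContinuousOn g (sphere z0 r))
    (hclose : ∀ z ∈ sphere z0 r, ‖g z - a * (z - z0)‖ < ‖a * (z - z0)‖) :
    WindingOn g z0 r 1 := by
  set q : ℂ → ℂ := fun z => g z / (a * (z - z0))
  have hne : ∀ z ∈ sphere z0 r, a * (z - z0) ≠ 0 := fun z hz =>
    norm_pos_iff.mp ((norm_nonneg _).trans_lt (hclose z hz))
  have hslit : MapsTo q (sphere z0 r) slitPlane := fun z hz => by
    have hlt : ‖q z - 1‖ < 1 := by
      rw [show q z - 1 = (g z - a * (z - z0)) / (a * (z - z0)) by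
        rw [sub_div, div_self (hne z hz)], norm_div, div_lt_one (norm_pos_iff.mpr (hne z hz))]
      exact hclose z hz
    simpa using mem_slitPlane_of_norm_lt_one hlt
  have hq : ContinuousOn q (sphere z0 r) := hg.div (by fun_prop) hne
  rw [← abs_of_nonneg hr] at hq hslit
  have hprod := (windingOn_const_mul_sub a z0 hr).mul (windingOn_zero_of_mapsTo_slitPlane hq hslit)
  refine hprod.congr fun z hz => ?_
  rw [abs_of_nonneg hr] at hz
  exact mul_div_cancel₀ _ (hne z hz)

lemma hasIndex_one_of_eventually_norm_sub_lt {g : ℂ → ℂ} {z0 a : ℂ}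
    (hcont : ∀ᶠ z in 𝓝 z0, ContinuousAt g z)
    (hclose : ∀ᶠ z in 𝓝[≠] z0, ‖g z - a * (z - z0)‖ < ‖a * (z - z0)‖) :
    HasIndex g z0 1 := by
  obtain ⟨ε, hε, hball⟩ :=
    Metric.eventually_nhds_iff.mp (hcont.and (eventually_nhdsWithin_iff.mp hclose))
  refine ⟨ε, hε, fun r hr hrε => windingOn_one_of_norm_sub_lt (a := a) hr.le ?_ ?_⟩
  · exact fun z hz => (hball ((mem_sphere.mp hz).trans_lt hrε)).1.continuousWithinAt
  · exact fun z hz => (hball ((mem_sphere.mp hz).trans_lt hrε)).2 (ne_of_mem_sphere hz hr.ne')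

lemma eventually_norm_sub_conj_sub_lt {h : ℂ → ℂ} {a z0 : ℂ} (hd : HasDerivAt h a z0)
    (ha : 1 < ‖a‖) (hz : h z0 = conj z0) :
    ∀ᶠ z in 𝓝[≠] z0, ‖h z - conj z - a * (z - z0)‖ < ‖a * (z - z0)‖ := by
  have hc : 0 < (‖a‖ - 1) / 2 := by linarith
  have hlo := ((hasDerivAt_iff_isLittleO.mp hd).def hc).filter_mono (nhdsWithin_le_nhds (s := {z0}ᶜ))
  filter_upwards [hlo, self_mem_nhdsWithin] with z hz_lo hz_ne
  have hpos : 0 < ‖z - z0‖ := norm_pos_iff.mpr (sub_ne_zero.mpr hz_ne)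
  calc ‖h z - conj z - a * (z - z0)‖
      = ‖(h z - h z0 - (z - z0) • a) - conj (z - z0)‖ := by
        rw [map_sub, ← hz, smul_eq_mul]; ring_nf
    _ ≤ ‖h z - h z0 - (z - z0) • a‖ + ‖z - z0‖ := by
        rw [← norm_conj (z - z0)]; exact norm_sub_le _ _
    _ ≤ (‖a‖ - 1) / 2 * ‖z - z0‖ + ‖z - z0‖ := by gcongr
    _ < ‖a‖ * ‖z - z0‖ := by nlinarith
    _ = ‖a * (z - z0)‖ := (norm_mul _ _).symm

theorem index_sense_preserving_general (h f : ℂ → ℂ) (z0 : ℂ)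
    (hh : AnalyticAt ℂ h z0)
    (hf : ∀ z, f z = h z - (starRingEnd ℂ) z)
    (hz : f z0 = 0)
    (hsp : 1 < ‖deriv h z0‖) :
    HasIndex f z0 1 := by
  obtain rfl : f = fun z => h z - conj z := funext hf
  refine hasIndex_one_of_eventually_norm_sub_lt (a := deriv h z0) ?_ ?_
  · exact hh.eventually_analyticAt.mono fun z hz =>
      hz.continuousAt.sub continuous_conj.continuousAt
  · exact eventually_norm_sub_conj_sub_lt hh.differentiableAt.hasDerivAt hsp (sub_eq_zero.mp hz)

theorem index_sense_preserving (h f : ℂ → ℂ) (z0 : ℂ)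
    (hh : AnalyticAt ℂ h z0)
    (hf : ∀ z, f z = h z - (starRingEnd ℂ) z)
    (hz : f z0 = 0)
    (hiso : ∀ᶠ z in nhdsWithin z0 {z0}ᶜ, f z ≠ 0)
    (hsp : 1 < ‖deriv h z0‖) :
    HasIndex f z0 1 :=
  index_sense_preserving_general h f z0 hh hf hz hsp
end

section
/- Let h be a rational function of type (j, n) with j ≤ n and degree at least 2, and f(z) = h(z) - conj(z). Then for all sufficiently large R, the winding of f along the circle |z| = R equals -1. -/
open Complex Set

/-! On the circle `‖z‖ = R` we have `f = -conj z + h` with `h = p / q`. Since `deg p ≤ deg q`,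
`h` is bounded at infinity, so for large `R` the perturbation `h` is smaller than
`‖-conj z‖ = R`. Then `f / (-conj z)` stays in the disc `‖w - 1‖ < 1`, where `arg` is
continuous, so `f` has the same winding as `-conj z`, namely `-1`. -/

open Polynomial Filter Bornology Metric ComplexConjugate

theorem WindingOn.of_norm_sub_lt {F G : ℂ → ℂ} {z0 : ℂ} {r : ℝ} {m : ℤ}
    (hF : WindingOn F z0 r m)
    (hFc : ContinuousOn F (sphere z0 |r|)) (hGc : ContinuousOn G (sphere z0 |r|))
    (hlt : ∀ z ∈ sphere z0 |r|, ‖G z - F z‖ < ‖F z‖) : WindingOn G z0 r m := by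
  obtain ⟨θ, hθc, hθF, hθend⟩ := hF
  set c : ℝ → ℂ := fun t => z0 + r * exp (I * t)
  have hc : c = circleMap z0 r := by ext t; simp [c, circleMap, mul_comm I]
  have hc_mem : ∀ t, c t ∈ sphere z0 |r| := hc ▸ circleMap_mem_sphere' z0 r
  have hF0 : ∀ t, F (c t) ≠ 0 := fun t h =>
    (norm_nonneg _).not_gt (by simpa [h] using hlt _ (hc_mem t))
  set u : ℝ → ℂ := fun t => G (c t) / F (c t)
  have hu_cont : Continuous u := by
    have hcc : Continuous c := hc ▸ continuous_circleMap z0 r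
    exact (hGc.comp_continuous hcc hc_mem).div (hFc.comp_continuous hcc hc_mem) hF0
  have hu_slit : ∀ t, u t ∈ slitPlane := fun t => ball_one_subset_slitPlane <| by
    rw [mem_ball, dist_eq_norm, div_sub_one (hF0 t), norm_div,
      div_lt_one (norm_pos_iff.mpr (hF0 t))]
    exact hlt _ (hc_mem t)
  have harg_cont : Continuous fun t => arg (u t) :=
    continuous_iff_continuousAt.mpr fun t =>
      (continuousAt_arg (hu_slit t)).comp hu_cont.continuousAt
  refine ⟨fun t => θ t + arg (u t), hθc.add harg_cont.continuousOn, fun t ht => ?_, ?_⟩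
  · have hG : G (c t) = F (c t) * u t := (mul_div_cancel₀ _ (hF0 t)).symm
    have hu := norm_mul_exp_arg_mul_I (u t)
    have hθt : F (c t) = ‖F (c t)‖ * exp (I * θ t) := hθF t ht
    rw [hG, norm_mul]
    calc F (c t) * u t = (‖F (c t)‖ * exp (I * θ t)) * (‖u t‖ * exp (I * arg (u t))) := by
          rw [← hθt, mul_comm I (arg (u t) : ℂ), hu]
      _ = _ := by push_cast; rw [mul_add, exp_add]; ring
  · have hu_per : u (2 * Real.pi) = u 0 := by
      simp only [u, hc, (periodic_circleMap z0 r).eq]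
    simp only [hu_per]
    linarith

theorem windingOn_neg_conj {r : ℝ} (hr : 0 < r) : WindingOn (fun z => -conj z) 0 r (-1) := by
  refine ⟨fun t => Real.pi - t, by fun_prop, fun t _ => ?_, by push_cast; ring⟩
  have hnorm : ‖-conj (0 + r * exp (I * t))‖ = r := by
    rw [norm_neg, norm_conj, zero_add, norm_mul, norm_exp_I_mul_ofReal, mul_one, norm_real,
      Real.norm_of_nonneg hr.le]
  rw [hnorm]
  dsimp only
  rw [zero_add, map_mul, conj_ofReal, ← exp_conj, map_mul, conj_I, conj_ofReal,
    ofReal_sub, mul_sub, exp_sub, mul_comm I (Real.pi : ℂ), exp_pi_mul_I, neg_mul, exp_neg]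
  ring

theorem Polynomial.exists_eventually_norm_eval_div_le {𝕜 : Type*} [NormedField 𝕜] {p q : 𝕜[X]}
    (hq : q ≠ 0) (hdeg : p.degree ≤ q.degree) :
    ∃ C, ∀ᶠ z in cobounded 𝕜, q.eval z ≠ 0 ∧ ‖p.eval z / q.eval z‖ ≤ C := by
  obtain ⟨C, hC⟩ := (isBigO_cobounded_of_degree_le hdeg).bound
  have hroots : ∀ᶠ z in cobounded 𝕜, q.eval z ≠ 0 :=
    (finite_setOfPred_isRoot hq).isBounded
  refine ⟨C, ?_⟩
  filter_upwards [hC, hroots] with z hpq hqz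
  rw [norm_div, div_le_iff₀ (norm_pos_iff.mpr hqz)]
  exact ⟨hqz, hpq⟩

theorem winding_rational_type_le_general (p q : Polynomial ℂ) (f : ℂ → ℂ) (hq : q ≠ 0)
    (hdeg : p.degree ≤ q.degree)
    (hf : ∀ z, f z = p.eval z / q.eval z - (starRingEnd ℂ) z) :
    ∃ R0 : ℝ, ∀ R : ℝ, R0 < R → WindingOn f 0 R (-1) := by
  obtain ⟨C, hC⟩ := exists_eventually_norm_eval_div_le hq hdeg
  obtain ⟨R0, -, hR0⟩ := hasBasis_cobounded_norm.eventually_iff.mp hC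
  obtain rfl : f = fun z => p.eval z / q.eval z - conj z := funext hf
  refine ⟨max R0 (max C 0), fun R hR => ?_⟩
  obtain ⟨hR0R, hCR, hRpos⟩ : R0 < R ∧ C < R ∧ 0 < R := by simpa only [max_lt_iff] using hR
  have hsphere : ∀ z ∈ sphere (0 : ℂ) |R|, q.eval z ≠ 0 ∧ ‖p.eval z / q.eval z‖ < ‖z‖ := by
    intro z hz
    rw [mem_sphere_zero_iff_norm, abs_of_pos hRpos] at hz
    obtain ⟨hqz, hle⟩ := hR0 (hz ▸ hR0R.le)
    exact ⟨hqz, hz ▸ hle.trans_lt hCR⟩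
  refine (windingOn_neg_conj hRpos).of_norm_sub_lt (by fun_prop) ?_ fun z hz => ?_
  · exact (p.continuous.continuousOn.div q.continuous.continuousOn
      fun z hz => (hsphere z hz).1).sub continuous_conj.continuousOn
  · rw [sub_neg_eq_add, sub_add_cancel, norm_neg, norm_conj]
    exact (hsphere z hz).2

theorem winding_rational_type_le (p q : Polynomial ℂ) (f : ℂ → ℂ) (hq : q ≠ 0)
    (hcop : IsCoprime p q)
    (hdeg : p.degree ≤ q.degree) (hdeg2 : 2 ≤ q.natDegree)
    (hf : ∀ z, f z = p.eval z / q.eval z - (starRingEnd ℂ) z) :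
    ∃ R0 : ℝ, ∀ R : ℝ, R0 < R → WindingOn f 0 R (-1) :=
  winding_rational_type_le_general p q f hq hdeg hf
end

section
/- Let h be a polynomial of degree n ≥ 2 and f(z) = h(z) - conj(z). Then for all sufficiently large R, the winding of f along the circle |z| = R equals n. -/
open Complex Set

/-! On a circle `|z| = R` with `R` large, the leading term `a z ^ n` of `p` dominates
`p z - conj z - a z ^ n`, which is `O(R ^ (n - 1))` because `n ≥ 2`. Hence
`f z = a z ^ n * u z` with `|u z - 1| < 1`, so `u` stays in the slit plane and
`arg a + n t + arg (u (R e^{it}))` is a continuous branch of `arg f` along the circle that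
increases by exactly `2πn`. -/

open Metric Polynomial ComplexConjugate

theorem Polynomial.norm_eval_sub_leadingCoeff_mul_pow_le {R : Type*} [NormedRing R]
    [NormOneClass R] (p : R[X]) {z : R} (hz : 1 ≤ ‖z‖) :
    ‖p.eval z - p.leadingCoeff * z ^ p.natDegree‖ ≤
      (∑ i ∈ Finset.range p.natDegree, ‖p.coeff i‖) * ‖z‖ ^ (p.natDegree - 1) := by
  rw [eval_eq_sum_range, Finset.sum_range_succ, coeff_natDegree, add_sub_cancel_right,
    Finset.sum_mul]
  refine (norm_sum_le _ _).trans (Finset.sum_le_sum fun i hi => ?_)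
  have hi : i ≤ p.natDegree - 1 := by
    have := Finset.mem_range.mp hi
    omega
  calc ‖p.coeff i * z ^ i‖ ≤ ‖p.coeff i‖ * ‖z‖ ^ i :=
        (norm_mul_le _ _).trans (mul_le_mul_of_nonneg_left (norm_pow_le _ _) (norm_nonneg _))
    _ ≤ ‖p.coeff i‖ * ‖z‖ ^ (p.natDegree - 1) := by gcongr

namespace Complex

theorem div_mem_slitPlane_of_norm_sub_lt {z w : ℂ} (h : ‖z - w‖ < ‖w‖) :
    z / w ∈ slitPlane := by
  have hw : w ≠ 0 := norm_pos_iff.mp ((norm_nonneg _).trans_lt h)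
  refine ball_one_subset_slitPlane ?_
  rwa [mem_ball, dist_eq, div_sub_one hw, norm_div, div_lt_one (norm_pos_iff.mpr hw)]

theorem mul_pow_mul_eq_norm_mul_exp (c v : ℂ) {r : ℝ} (hr : 0 ≤ r) (n : ℕ) (t : ℝ) :
    c * (r * exp (I * t)) ^ n * v =
      ‖c * (r * exp (I * t)) ^ n * v‖ * exp (I * ↑(arg c + n * t + arg v)) := by
  have hexp : exp (I * ↑(arg c + n * t + arg v)) =
      exp (arg c * I) * exp (I * t) ^ n * exp (arg v * I) := by
    rw [← exp_nat_mul, ← exp_add, ← exp_add]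
    push_cast
    ring_nf
  conv_lhs => rw [← norm_mul_exp_arg_mul_I c, ← norm_mul_exp_arg_mul_I v]
  rw [hexp, norm_mul, norm_mul, norm_pow, norm_mul, norm_real, norm_exp_I_mul_ofReal,
    Real.norm_of_nonneg hr]
  push_cast
  ring

end Complex

theorem windingOn_of_eq_mul_pow {f u : ℂ → ℂ} {z0 c : ℂ} {r : ℝ} {n : ℕ} (hr : 0 ≤ r)
    (hu : ContinuousOn u (sphere z0 r)) (hslit : ∀ z ∈ sphere z0 r, u z ∈ slitPlane)
    (hf : ∀ z ∈ sphere z0 r, f z = c * (z - z0) ^ n * u z) : WindingOn f z0 r n := by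
  set γ : ℝ → ℂ := fun t => z0 + r * exp (I * t)
  have hγ : Continuous γ := by fun_prop
  have hγ_mem : ∀ t, γ t ∈ sphere z0 r := fun t => by
    simp [γ, norm_exp_I_mul_ofReal, abs_of_nonneg hr]
  have hγ_period : γ (2 * Real.pi) = γ 0 := by
    simp [γ, mul_comm I, exp_two_pi_mul_I]
  have harg : Continuous fun t => arg (u (γ t)) := by
    have huγ : Continuous (u ∘ γ) := hu.comp_continuous hγ hγ_mem
    exact continuous_iff_continuousAt.2 fun t =>
      (continuousAt_arg (hslit _ (hγ_mem t))).comp (f := u ∘ γ) huγ.continuousAt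
  refine ⟨fun t => arg c + n * t + arg (u (γ t)), by fun_prop, fun t _ => ?_, ?_⟩
  · rw [hf _ (hγ_mem t), add_sub_cancel_left]
    exact mul_pow_mul_eq_norm_mul_exp c _ hr n t
  · simp only [hγ_period]
    push_cast
    ring

theorem windingOn_of_norm_sub_lt {f : ℂ → ℂ} {z0 c : ℂ} {r : ℝ} {n : ℕ} (hr : 0 ≤ r)
    (hf : ContinuousOn f (sphere z0 r))
    (hlt : ∀ z ∈ sphere z0 r, ‖f z - c * (z - z0) ^ n‖ < ‖c‖ * r ^ n) :
    WindingOn f z0 r n := by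
  have hnorm : ∀ z ∈ sphere z0 r, ‖c * (z - z0) ^ n‖ = ‖c‖ * r ^ n := fun z hz => by
    rw [norm_mul, norm_pow, ← dist_eq, mem_sphere.mp hz]
  have hne : ∀ z ∈ sphere z0 r, c * (z - z0) ^ n ≠ 0 := fun z hz =>
    norm_pos_iff.mp (hnorm z hz ▸ (norm_nonneg _).trans_lt (hlt z hz))
  refine windingOn_of_eq_mul_pow (c := c) (u := fun z => f z / (c * (z - z0) ^ n)) hr
    (hf.div (by fun_prop) hne) (fun z hz => ?_) (fun z hz => ?_)
  · exact div_mem_slitPlane_of_norm_sub_lt (hnorm z hz ▸ hlt z hz)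
  · exact (mul_div_cancel₀ _ (hne z hz)).symm

theorem winding_polynomial (p : Polynomial ℂ) (f : ℂ → ℂ)
    (hdeg : 2 ≤ p.natDegree)
    (hf : ∀ z, f z = p.eval z - (starRingEnd ℂ) z) :
    ∃ R0 : ℝ, ∀ R : ℝ, R0 < R → WindingOn f 0 R (p.natDegree : ℤ) := by
  set n := p.natDegree
  set a := p.leadingCoeff
  set M := ∑ i ∈ Finset.range n, ‖p.coeff i‖
  have ha : 0 < ‖a‖ :=
    norm_pos_iff.mpr (leadingCoeff_ne_zero.mpr (ne_zero_of_natDegree_gt hdeg))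
  refine ⟨max 1 ((M + 1) / ‖a‖), fun R hR => ?_⟩
  have hR1 : 1 < R := (le_max_left _ _).trans_lt hR
  have hRa : M + 1 < ‖a‖ * R := (div_lt_iff₀' ha).mp ((le_max_right _ _).trans_lt hR)
  have hf_cont : Continuous f := by
    rw [funext hf]
    fun_prop
  refine windingOn_of_norm_sub_lt (c := a) (by linarith) hf_cont.continuousOn fun z hz => ?_
  rw [mem_sphere_zero_iff_norm] at hz
  rw [hf, sub_zero]
  calc ‖p.eval z - conj z - a * z ^ n‖ ≤ ‖p.eval z - a * z ^ n‖ + ‖conj z‖ := by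
        rw [sub_right_comm]
        exact norm_sub_le _ _
    _ ≤ M * R ^ (n - 1) + R ^ (n - 1) := by
        gcongr
        · exact hz ▸ p.norm_eval_sub_leadingCoeff_mul_pow_le (hz ▸ hR1.le)
        · rw [norm_conj, hz]
          exact le_self_pow₀ hR1.le (by omega)
    _ < ‖a‖ * R * R ^ (n - 1) := by
        rw [← add_one_mul]
        gcongr
    _ = ‖a‖ * R ^ n := by rw [mul_assoc, ← pow_succ', Nat.sub_add_cancel (by omega)]
end

section
/- The function f(z) = -z/(z² - 1) - conj(z) has exactly one zero, namely z = 0, and this zero is singular (i.e., |h'(0)| = 1 where h(z) = -z/(z²-1)). -/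
/-!
Clearing the denominator, `h z = conj z` becomes `conj z - z = |z|² z`. The left side is purely
imaginary, so comparing real parts gives `|z|² Re z = 0`, and comparing imaginary parts gives
`Im z (|z|² + 2) = 0`; hence `z = 0`. The quotient rule gives `h'(z) = (z² + 1)/(z² - 1)²`, which
is `1` at the origin.
-/

open Complex ComplexConjugate

theorem Complex.conj_sub_self_eq_normSq_mul_iff (z : ℂ) :
    conj z - z = normSq z * z ↔ z = 0 := by
  refine ⟨fun hz => ?_, fun hz => by simp [hz]⟩
  have hre := congrArg re hz
  have him := congrArg im hz
  simp only [sub_re, sub_im, conj_re, conj_im, mul_re, mul_im, ofReal_re, ofReal_im,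
    normSq_apply] at hre him
  have hy : z.im = 0 := by
    have : z.im * (z.re ^ 2 + z.im ^ 2 + 2) = 0 := by linear_combination -him
    exact (mul_eq_zero.mp this).resolve_right (by positivity)
  have hx : z.re ^ 3 = 0 := by linear_combination -hre - z.re * z.im * hy
  exact Complex.ext (pow_eq_zero_iff three_ne_zero |>.mp hx) hy

theorem Complex.neg_div_sq_sub_one_eq_conj_iff {z : ℂ} (hz : z ^ 2 ≠ 1) :
    -z / (z ^ 2 - 1) = conj z ↔ conj z - z = normSq z * z := by
  rw [div_eq_iff (sub_ne_zero.mpr hz), normSq_eq_conj_mul_self]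
  constructor <;> intro h <;> linear_combination h

theorem hasDerivAt_neg_div_sq_sub_one {z : ℂ} (hz : z ^ 2 ≠ 1) :
    HasDerivAt (fun w : ℂ => -w / (w ^ 2 - 1)) ((z ^ 2 + 1) / (z ^ 2 - 1) ^ 2) z := by
  have hquot : HasDerivAt (fun w : ℂ => -w / (w ^ 2 - 1)) _ z :=
    ((hasDerivAt_id' z).neg).div ((hasDerivAt_pow 2 z).sub_const 1) (sub_ne_zero.mpr hz)
  exact hquot.congr_deriv (by simp only [Pi.neg_apply]; push_cast; ring)

theorem example_index_plus_one_zeros :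
    let h : ℂ → ℂ := fun z => -z / (z ^ 2 - 1)
    let f : ℂ → ℂ := fun z => h z - (starRingEnd ℂ) z
    (∀ z : ℂ, z ≠ 1 → z ≠ -1 → (f z = 0 ↔ z = 0)) ∧
    ‖deriv h 0‖ = 1 := by
  intro h f
  refine ⟨fun z hz₁ hz₂ => ?_, ?_⟩
  · have hz : z ^ 2 ≠ 1 := by simp [hz₁, hz₂]
    exact sub_eq_zero.trans <|
      (neg_div_sq_sub_one_eq_conj_iff hz).trans (conj_sub_self_eq_normSq_mul_iff z)
  · rw [(hasDerivAt_neg_div_sq_sub_one (by norm_num)).deriv]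
    norm_num
end

section
/- The function f(z) = z/(z² - 1) - conj(z) has exactly three zeros: 0, √2, and -√2. The zero 0 is singular (|h'(0)| = 1), while ±√2 are sense-preserving zeros with |h'(±√2)| = 3. -/
/-!
A zero `z ≠ ±1` satisfies `z = conj z * (z² - 1)`; multiplying by `z` gives
`z² (|z|² - 1) = |z|²`. For `z ≠ 0`, comparing moduli forces `||z|² - 1| = 1`, hence `|z|² = 2`
and then `z² = 2`. The derivative `h' z = -(z² + 1) / (z² - 1)²` depends only on `z²`, which gives
`|h' 0| = 1` and `|h' (±√2)| = 3`.
-/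

open Complex ComplexConjugate

lemma ofReal_sqrt_two_sq : ((Real.sqrt 2 : ℝ) : ℂ) ^ 2 = 2 := by
  rw [← ofReal_pow, Real.sq_sqrt zero_le_two, ofReal_ofNat]

lemma sq_eq_two_iff {z : ℂ} : z ^ 2 = 2 ↔ z = Real.sqrt 2 ∨ z = -(Real.sqrt 2 : ℂ) := by
  rw [← sq_eq_sq_iff_eq_or_eq_neg, ofReal_sqrt_two_sq]

lemma sq_sub_one_ne_zero {z : ℂ} (h₁ : z ≠ 1) (h₂ : z ≠ -1) : z ^ 2 - 1 ≠ 0 := by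
  rw [sub_ne_zero, Ne, sq_eq_one_iff]
  tauto

lemma sq_eq_two_of_eq_conj_mul {z : ℂ} (hz : z ≠ 0) (h : z = conj z * (z ^ 2 - 1)) :
    z ^ 2 = 2 := by
  have hkey : z ^ 2 * ((‖z‖ : ℂ) ^ 2 - 1) = (‖z‖ : ℂ) ^ 2 := by
    linear_combination -z * h - (z ^ 2 - 1) * mul_conj' z
  have hnorm : ‖z‖ ^ 2 * |‖z‖ ^ 2 - 1| = ‖z‖ ^ 2 := by
    have := congrArg norm hkey
    rwa [← ofReal_pow, ← ofReal_one, ← ofReal_sub, norm_mul, norm_pow, norm_real, norm_real,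
      Real.norm_eq_abs, Real.norm_eq_abs, abs_of_nonneg (by positivity : (0:ℝ) ≤ ‖z‖ ^ 2)] at this
  have hpos : 0 < ‖z‖ ^ 2 := by positivity
  have habs : |‖z‖ ^ 2 - 1| = 1 := by
    simpa using mul_left_cancel₀ hpos.ne' (hnorm.trans (mul_one _).symm)
  have htwo : ‖z‖ ^ 2 = 2 := by
    rcases abs_eq zero_le_one |>.mp habs with h | h <;> linarith
  rw [← ofReal_pow, htwo, ofReal_ofNat] at hkey
  linear_combination hkey

lemma div_sq_sub_one_sub_conj_eq_zero_iff {z : ℂ} (hz : z ^ 2 - 1 ≠ 0) :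
    z / (z ^ 2 - 1) - conj z = 0 ↔ z = 0 ∨ z = Real.sqrt 2 ∨ z = -(Real.sqrt 2 : ℂ) := by
  rw [sub_eq_zero, div_eq_iff hz]
  constructor
  · intro h
    by_cases h0 : z = 0
    · exact Or.inl h0
    · exact Or.inr (sq_eq_two_iff.mp (sq_eq_two_of_eq_conj_mul h0 h))
  · rintro (rfl | rfl | rfl) <;> norm_num [ofReal_sqrt_two_sq]

lemma deriv_div_sq_sub_one {z : ℂ} (hz : z ^ 2 - 1 ≠ 0) :
    deriv (fun z : ℂ => z / (z ^ 2 - 1)) z = -(z ^ 2 + 1) / (z ^ 2 - 1) ^ 2 := by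
  have hden : HasDerivAt (fun z : ℂ => z ^ 2 - 1) (2 * z) z := by
    simpa using (hasDerivAt_pow 2 z).sub_const 1
  refine ((hasDerivAt_id' z).div hden hz).deriv.trans ?_
  ring

lemma norm_deriv_div_sq_sub_one_of_sq_eq_two {z : ℂ} (hz : z ^ 2 = 2) :
    ‖deriv (fun z : ℂ => z / (z ^ 2 - 1)) z‖ = 3 := by
  rw [deriv_div_sq_sub_one (by rw [hz]; norm_num), hz]
  norm_num

theorem example_index_minus_one_zeros :
    let h : ℂ → ℂ := fun z => z / (z ^ 2 - 1)
    let f : ℂ → ℂ := fun z => h z - (starRingEnd ℂ) z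
    (∀ z : ℂ, z ≠ 1 → z ≠ -1 →
      (f z = 0 ↔ z = 0 ∨ z = (Real.sqrt 2 : ℂ) ∨ z = -(Real.sqrt 2 : ℂ))) ∧
    ‖deriv h 0‖ = 1 ∧
    ‖deriv h (Real.sqrt 2 : ℂ)‖ = 3 ∧
    ‖deriv h (-(Real.sqrt 2 : ℂ))‖ = 3 := by
  intro h f
  refine ⟨fun z h₁ h₂ => div_sq_sub_one_sub_conj_eq_zero_iff (sq_sub_one_ne_zero h₁ h₂), ?_,
    norm_deriv_div_sq_sub_one_of_sq_eq_two ofReal_sqrt_two_sq,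
    norm_deriv_div_sq_sub_one_of_sq_eq_two (by rw [neg_sq, ofReal_sqrt_two_sq])⟩
  rw [deriv_div_sq_sub_one (by norm_num)]
  norm_num
end

section
/- Let f(z) = z + Σ_{k≥2} a_k z^k − conj(z) be harmonic with an isolated singular zero at the origin, and let n ≥ 2 be minimal with a_n ≠ 0. If n is odd and Re(a_n) > 0, then ind(f; 0) = +1; if n is odd and Re(a_n) < 0, then ind(f; 0) = −1. -/
open Complex Set

/-!
With `n = 2p + 1`, `y = Im z` and `r = |z|`, the expansion `f z = 2iy + aₙ zⁿ + O(rⁿ⁺¹)` gives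
`Re (f z · z̄) = 2y² + r² Re (aₙ z²ᵖ) + O(rⁿ⁺²)` and
`-Re (f z · z) = 2y² - Re (aₙ z²ᵖ⁺²) + O(rⁿ⁺²)`.
Even powers are nearly real: `|z²ᵏ - r²ᵏ| ≤ 2k r²ᵏ⁻¹ |y|`, so both right-hand sides are at least
`2y² ± Re aₙ rⁿ⁺¹ - B rⁿ |y| - C rⁿ⁺²`, and by AM-GM the cross term is absorbed by `2y²` at the
cost of `B² r²ⁿ / 8 ≤ B² rⁿ⁺² / 8`. Hence for small `r` either `f z / z` (if `Re aₙ > 0`) or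
`f z / (-z⁻¹) = -f z · z` (if `Re aₙ < 0`) lies in the right half-plane on the circle `|z| = r`,
where `arg` is continuous, and `f` winds like `z` or like `-z⁻¹`.
-/

open ComplexConjugate Metric Filter Topology FormalMultilinearSeries

theorem windingOn_of_re_div_pos {f : ℂ → ℂ} {z0 : ℂ} {r : ℝ} (m : ℤ) (c : ℂ) (hr : 0 < r)
    (hf : ContinuousOn f (sphere z0 r))
    (hpos : ∀ z ∈ sphere z0 r, 0 < (f z / (c * (z - z0) ^ m)).re) :
    WindingOn f z0 r m := by
  set e : ℝ → ℂ := fun t => (r : ℂ) * exp (I * t)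
  have he_norm (t : ℝ) : ‖e t‖ = r := by
    simp [e, norm_exp_I_mul_ofReal, abs_of_pos hr]
  have he_mem (t : ℝ) : z0 + e t ∈ sphere z0 r := by simp [he_norm]
  set w : ℝ → ℂ := fun t => f (z0 + e t) / (c * e t ^ m)
  have hw_pos (t : ℝ) : 0 < (w t).re := by simpa [w] using hpos _ (he_mem t)
  have hc : c ≠ 0 := by
    rintro rfl
    simpa [w] using hw_pos 0
  have he_ne (t : ℝ) : e t ≠ 0 := by
    rw [← norm_ne_zero_iff, he_norm]; exact hr.ne'
  have hw_cont : Continuous w := by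
    refine Continuous.div ?_ (continuous_const.mul ((by fun_prop : Continuous e).zpow₀ m
      fun t => Or.inl (he_ne t))) fun t => mul_ne_zero hc (zpow_ne_zero _ (he_ne t))
    exact hf.comp_continuous (by fun_prop) he_mem
  refine ⟨fun t => arg c + m * t + arg (w t), ?_, fun t _ => ?_, ?_⟩
  · refine (continuous_const.add (continuous_const.mul continuous_id)).add ?_ |>.continuousOn
    exact continuous_iff_continuousAt.2 fun t =>
      (continuousAt_arg (mem_slitPlane_iff.2 (Or.inl (hw_pos t)))).comp hw_cont.continuousAt
  · have hf_eq : f (z0 + e t) = c * e t ^ m * w t := (mul_div_cancel₀ _ (mul_ne_zero hc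
      (zpow_ne_zero _ (he_ne t)))).symm
    have he_pow : e t ^ m = (r : ℂ) ^ m * exp (I * (m * t)) := by
      rw [mul_zpow, ← exp_int_mul]; ring_nf
    rw [hf_eq, norm_mul, norm_mul, norm_zpow, he_norm]
    calc c * e t ^ m * w t
        = (‖c‖ * exp (arg c * I)) * ((r : ℂ) ^ m * exp (I * (m * t))) *
            (‖w t‖ * exp (arg (w t) * I)) := by
          rw [norm_mul_exp_arg_mul_I, norm_mul_exp_arg_mul_I, he_pow]
      _ = _ := by
          rw [show I * ((arg c + m * t + arg (w t) : ℝ) : ℂ) =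
            arg c * I + I * (m * t) + arg (w t) * I by push_cast; ring, exp_add, exp_add]
          push_cast
          ring
  · have : w (2 * Real.pi) = w 0 := by
      simp only [w, e]
      congr 4 <;> simp [mul_comm I, exp_two_pi_mul_I]
    simp only [this]
    ring

theorem hasIndex_of_eventually_re_div_pos {f : ℂ → ℂ} {z0 : ℂ} (m : ℤ) (c : ℂ)
    (h : ∀ᶠ z in 𝓝[≠] z0, ContinuousAt f z ∧ 0 < (f z / (c * (z - z0) ^ m)).re) :
    HasIndex f z0 m := by
  obtain ⟨ε, hε, hball⟩ := Metric.eventually_nhds_iff.1 (eventually_nhdsWithin_iff.1 h)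
  refine ⟨ε, hε, fun r hr hrε => ?_⟩
  have hsphere (z : ℂ) (hz : z ∈ sphere z0 r) :
      ContinuousAt f z ∧ 0 < (f z / (c * (z - z0) ^ m)).re :=
    hball (by rwa [mem_sphere.1 hz]) (ne_of_mem_sphere hz hr.ne')
  exact windingOn_of_re_div_pos m c hr (fun z hz => (hsphere z hz).1.continuousWithinAt)
    fun z hz => (hsphere z hz).2

theorem hasFPowerSeriesOnBall_ofScalars_of_hasSum {𝕜 : Type*} [DenselyNormedField 𝕜]
    {a : ℕ → 𝕜} {h : 𝕜 → 𝕜} {R : ℝ} (hR : 0 < R)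
    (hsum : ∀ z : 𝕜, ‖z‖ < R → HasSum (fun k => a k * z ^ k) (h z)) :
    HasFPowerSeriesOnBall h (ofScalars 𝕜 a) 0 (ENNReal.ofReal R) where
  r_le := by
    refine ENNReal.le_of_forall_nnreal_lt fun ρ hρ => ?_
    obtain ⟨z, hρz, hzR⟩ := NormedField.exists_lt_norm_lt 𝕜 ρ.2 (ENNReal.coe_lt_ofReal.1 hρ)
    have hz : Tendsto (fun k => ‖ofScalars 𝕜 a k‖ * (‖z‖₊ : ℝ) ^ k) atTop (𝓝 0) := by
      simpa [norm_mul] using (hsum z hzR).summable.tendsto_atTop_zero.norm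
    exact (ENNReal.coe_le_coe.2 hρz.le).trans ((ofScalars 𝕜 a).le_radius_of_tendsto hz)
  r_pos := ENNReal.ofReal_pos.2 hR
  hasSum hy := by
    simpa [ofScalars_apply_eq, mul_comm] using hsum _ (by simpa using hy)

theorem partialSum_ofScalars {𝕜 : Type*} [NontriviallyNormedField 𝕜] (a : ℕ → 𝕜) (m : ℕ)
    (z : 𝕜) : (ofScalars 𝕜 a).partialSum m z = ∑ k ∈ Finset.range m, a k * z ^ k := by
  simp [partialSum, mul_comm]

theorem HasFPowerSeriesAt.isBigO_sub_id_add_leading {𝕜 : Type*} [NontriviallyNormedField 𝕜]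
    {a : ℕ → 𝕜} {h : 𝕜 → 𝕜} (hp : HasFPowerSeriesAt h (ofScalars 𝕜 a) 0)
    (ha0 : a 0 = 0) (ha1 : a 1 = 1) {n : ℕ} (hn : 2 ≤ n)
    (hmin : ∀ m : ℕ, 2 ≤ m → m < n → a m = 0) :
    (fun z => h z - (z + a n * z ^ n)) =O[𝓝 0] fun z => ‖z‖ ^ (n + 1) := by
  have hlead (z : 𝕜) : ∑ k ∈ Finset.range (n + 1), a k * z ^ k = z + a n * z ^ n := by
    rw [Finset.sum_range_succ, Finset.sum_eq_single_of_mem 1 (by simp; omega)]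
    · simp [ha1]
    · intro k hk hk1
      obtain rfl | hk2 : k = 0 ∨ 2 ≤ k := by omega
      · simp [ha0]
      · simp [hmin k hk2 (by simpa using hk)]
  simpa [partialSum_ofScalars, hlead] using hp.isBigO_sub_partialSum_pow (n + 1)

theorem norm_pow_sub_pow_le_of_norm_le {𝕜 : Type*} [NormedField 𝕜] {x y : 𝕜} {M : ℝ} (p : ℕ)
    (hx : ‖x‖ ≤ M) (hy : ‖y‖ ≤ M) : ‖x ^ p - y ^ p‖ ≤ p * M ^ (p - 1) * ‖x - y‖ := by
  have hM : 0 ≤ M := (norm_nonneg x).trans hx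
  rw [← geom_sum₂_mul, norm_mul]
  gcongr
  calc ‖∑ i ∈ Finset.range p, x ^ i * y ^ (p - 1 - i)‖
      ≤ ∑ i ∈ Finset.range p, M ^ (p - 1) := by
        refine norm_sum_le_of_le _ fun i hi => ?_
        calc ‖x ^ i * y ^ (p - 1 - i)‖ ≤ M ^ i * M ^ (p - 1 - i) := by
              rw [norm_mul, norm_pow, norm_pow]; gcongr
          _ = M ^ (p - 1) := by
              rw [← pow_add, Nat.add_sub_cancel' (by simp at hi; omega)]
    _ = p * M ^ (p - 1) := by simp

theorem norm_pow_two_mul_sub_norm_pow_le (z : ℂ) (p : ℕ) :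
    ‖z ^ (2 * p) - ((‖z‖ ^ (2 * p) : ℝ) : ℂ)‖ ≤ 2 * p * ‖z‖ ^ (2 * p - 1) * |z.im| := by
  have hsplit : z ^ (2 * p) - ((‖z‖ ^ (2 * p) : ℝ) : ℂ) = z ^ p * (z ^ p - conj z ^ p) := by
    rw [mul_sub, ← pow_add, ← two_mul, ← mul_pow, mul_conj']
    push_cast
    ring
  have hconj : ‖z - conj z‖ = 2 * |z.im| := by
    simp [sub_conj]
  calc ‖z ^ (2 * p) - ((‖z‖ ^ (2 * p) : ℝ) : ℂ)‖
      ≤ ‖z‖ ^ p * (p * ‖z‖ ^ (p - 1) * ‖z - conj z‖) := by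
        rw [hsplit, norm_mul, norm_pow]
        gcongr
        exact norm_pow_sub_pow_le_of_norm_le p le_rfl (norm_conj z).le
    _ = 2 * p * ‖z‖ ^ (2 * p - 1) * |z.im| := by
        rw [hconj, show 2 * p - 1 = p + (p - 1) by omega, pow_add]
        ring

theorem abs_re_mul_pow_two_mul_sub_le (b z : ℂ) (p : ℕ) :
    |(b * z ^ (2 * p)).re - b.re * ‖z‖ ^ (2 * p)| ≤
      ‖b‖ * (2 * p * ‖z‖ ^ (2 * p - 1) * |z.im|) := by
  have hsplit : (b * z ^ (2 * p)).re - b.re * ‖z‖ ^ (2 * p) =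
      (b * (z ^ (2 * p) - ((‖z‖ ^ (2 * p) : ℝ) : ℂ))).re := by
    rw [mul_sub, sub_re, re_mul_ofReal]
  rw [hsplit]
  refine (abs_re_le_norm _).trans ?_
  rw [norm_mul]
  gcongr
  exact norm_pow_two_mul_sub_norm_pow_le z p

theorem abs_re_mul_le_of_norm_le {w u : ℂ} {C : ℝ} {n : ℕ} (hw : ‖w‖ ≤ C * ‖u‖ ^ (n + 1)) :
    |(w * u).re| ≤ C * ‖u‖ ^ (n + 2) := by
  refine (abs_re_le_norm _).trans ?_
  rw [norm_mul, pow_succ _ (n + 1)]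
  nlinarith [norm_nonneg u]

theorem re_mul_conj_ge_of_norm_sub_le {w z b : ℂ} {n : ℕ} {C : ℝ} (hn : Odd n)
    (hw : ‖w - (z - conj z + b * z ^ n)‖ ≤ C * ‖z‖ ^ (n + 1)) :
    2 * z.im ^ 2 + b.re * ‖z‖ ^ (n + 1) - ‖b‖ * (n - 1) * ‖z‖ ^ n * |z.im| -
      C * ‖z‖ ^ (n + 2) ≤ (w * conj z).re := by
  obtain ⟨p, rfl⟩ := hn
  set E := w - (z - conj z + b * z ^ (2 * p + 1)) with hE
  have hdecomp : w * conj z =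
      (z - conj z) * conj z + ((‖z‖ ^ 2 : ℝ) : ℂ) * (b * z ^ (2 * p)) + E * conj z := by
    rw [hE, ofReal_pow, ← mul_conj']
    ring
  have hmain : ((z - conj z) * conj z).re = 2 * z.im ^ 2 := by
    simp [sub_conj, mul_re]; ring
  have hpow : (2 * p : ℝ) * ‖z‖ ^ (2 * p - 1) * ‖z‖ ^ 2 = 2 * p * ‖z‖ ^ (2 * p + 1) := by
    rcases p with _ | p
    · simp
    · rw [show 2 * (p + 1) - 1 = 2 * p + 1 by omega]; push_cast; ring
  have hlead := mul_le_mul_of_nonneg_left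
    (abs_le.1 (abs_re_mul_pow_two_mul_sub_le b z p)).1 (sq_nonneg ‖z‖)
  have herr := abs_le.1 (abs_re_mul_le_of_norm_le (w := E) (u := conj z) (by rwa [norm_conj]))
  rw [norm_conj] at herr
  rw [hdecomp, add_re, add_re, hmain, re_ofReal_mul]
  push_cast
  linear_combination hlead + herr.1 + ‖b‖ * |z.im| * hpow

theorem neg_re_mul_self_ge_of_norm_sub_le {w z b : ℂ} {n : ℕ} {C : ℝ} (hn : Odd n)
    (hw : ‖w - (z - conj z + b * z ^ n)‖ ≤ C * ‖z‖ ^ (n + 1)) :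
    2 * z.im ^ 2 + -b.re * ‖z‖ ^ (n + 1) - ‖b‖ * (n + 1) * ‖z‖ ^ n * |z.im| -
      C * ‖z‖ ^ (n + 2) ≤ -(w * z).re := by
  obtain ⟨p, rfl⟩ := hn
  set E := w - (z - conj z + b * z ^ (2 * p + 1)) with hE
  have hdecomp : w * z = (z - conj z) * z + b * z ^ (2 * (p + 1)) + E * z := by
    rw [hE]; ring
  have hmain : ((z - conj z) * z).re = -(2 * z.im ^ 2) := by
    simp [sub_conj, mul_re]; ring
  have hlead := (abs_le.1 (abs_re_mul_pow_two_mul_sub_le b z (p + 1))).2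
  rw [show 2 * (p + 1) - 1 = 2 * p + 1 by omega] at hlead
  have herr := abs_le.1 (abs_re_mul_le_of_norm_le (w := E) hw)
  rw [hdecomp, add_re, add_re, hmain]
  push_cast at hlead ⊢
  linear_combination hlead + herr.2

theorem two_mul_sq_add_mul_pow_sub_pos {β B C r y : ℝ} {n : ℕ} (hn : 2 ≤ n) (hr0 : 0 < r)
    (hr1 : r ≤ 1) (hsmall : (B ^ 2 / 8 + C) * r < β) :
    0 < 2 * y ^ 2 + β * r ^ (n + 1) - B * r ^ n * |y| - C * r ^ (n + 2) := by
  have amgm : B * r ^ n * |y| ≤ 2 * y ^ 2 + B ^ 2 / 8 * r ^ (2 * n) := by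
    nlinarith [sq_nonneg (B * r ^ n - 4 * |y|), sq_abs y, pow_mul r 2 n, pow_mul' r 2 n]
  have hpow : B ^ 2 / 8 * r ^ (2 * n) ≤ B ^ 2 / 8 * r ^ (n + 2) :=
    mul_le_mul_of_nonneg_left (pow_le_pow_of_le_one hr0.le hr1 (by omega)) (by positivity)
  have hlead : 0 < r ^ (n + 1) * (β - (B ^ 2 / 8 + C) * r) :=
    mul_pos (pow_pos hr0 _) (by linarith)
  have expand : r ^ (n + 1) * (β - (B ^ 2 / 8 + C) * r) =
      β * r ^ (n + 1) - B ^ 2 / 8 * r ^ (n + 2) - C * r ^ (n + 2) := by ring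
  linarith

theorem eventually_pos_of_lower_bound {Q : ℂ → ℝ} {β B C : ℝ} {n : ℕ} (hn : 2 ≤ n) (hβ : 0 < β)
    (hQ : ∀ᶠ z in 𝓝 0,
      2 * z.im ^ 2 + β * ‖z‖ ^ (n + 1) - B * ‖z‖ ^ n * |z.im| - C * ‖z‖ ^ (n + 2) ≤ Q z) :
    ∀ᶠ z in 𝓝[≠] 0, 0 < Q z := by
  have hsmall : ∀ᶠ z : ℂ in 𝓝 0, ‖z‖ ≤ 1 ∧ (B ^ 2 / 8 + C) * ‖z‖ < β := by
    have hlim : Tendsto (fun z : ℂ => (‖z‖, (B ^ 2 / 8 + C) * ‖z‖)) (𝓝 0) (𝓝 (0, 0)) := by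
      simpa using ((continuous_norm.prodMk (continuous_const.mul continuous_norm)).tendsto
        (0 : ℂ))
    exact hlim.eventually ((eventually_le_nhds zero_lt_one).prod_nhds (eventually_lt_nhds hβ))
  filter_upwards [nhdsWithin_le_nhds hQ, nhdsWithin_le_nhds hsmall, self_mem_nhdsWithin]
    with z hz ⟨hz1, hzβ⟩ hz0
  exact (two_mul_sq_add_mul_pow_sub_pos hn (norm_pos_iff.2 hz0) hz1 hzβ).trans_le hz

theorem eventually_re_mul_conj_pos {g : ℂ → ℂ} {b : ℂ} {n : ℕ} (hn : Odd n) (hn2 : 2 ≤ n)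
    (hb : 0 < b.re)
    (hg : (fun z => g z - (z - conj z + b * z ^ n)) =O[𝓝 0] fun z => ‖z‖ ^ (n + 1)) :
    ∀ᶠ z in 𝓝[≠] 0, 0 < (g z * conj z).re := by
  obtain ⟨C, hC⟩ := hg.bound
  exact eventually_pos_of_lower_bound hn2 hb
    (hC.mono fun z hz => re_mul_conj_ge_of_norm_sub_le hn (by simpa using hz))

theorem eventually_re_mul_self_neg {g : ℂ → ℂ} {b : ℂ} {n : ℕ} (hn : Odd n) (hn2 : 2 ≤ n)
    (hb : b.re < 0)
    (hg : (fun z => g z - (z - conj z + b * z ^ n)) =O[𝓝 0] fun z => ‖z‖ ^ (n + 1)) :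
    ∀ᶠ z in 𝓝[≠] 0, (g z * z).re < 0 := by
  obtain ⟨C, hC⟩ := hg.bound
  refine (eventually_pos_of_lower_bound hn2 (neg_pos.2 hb)
    (hC.mono fun z hz => neg_re_mul_self_ge_of_norm_sub_le hn (by simpa using hz))).mono ?_
  exact fun z hz => neg_pos.1 hz

theorem re_div_pos_of_re_mul_conj_pos {w z : ℂ} (h : 0 < (w * conj z).re) : 0 < (w / z).re := by
  have hz : z ≠ 0 := by
    rintro rfl
    simp at h
  rw [div_re, ← add_div]
  exact div_pos (by simpa [mul_re] using h) (normSq_pos.2 hz)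

theorem index_singular_odd_case_general (a : ℕ → ℂ) (f : ℂ → ℂ) (R : ℝ) (hR : 0 < R)
    (ha0 : a 0 = 0) (ha1 : a 1 = 1)
    (hsum : ∀ z : ℂ, ‖z‖ < R →
      HasSum (fun k : ℕ => a k * z ^ k) (f z + (starRingEnd ℂ) z))
    (n : ℕ) (hn2 : 2 ≤ n)
    (hmin : ∀ m : ℕ, 2 ≤ m → m < n → a m = 0)
    (hnodd : Odd n) :
    (0 < (a n).re → HasIndex f 0 1) ∧ ((a n).re < 0 → HasIndex f 0 (-1)) := by
  have hp : HasFPowerSeriesAt (fun z => f z + conj z) (ofScalars ℂ a) 0 :=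
    (hasFPowerSeriesOnBall_ofScalars_of_hasSum hR hsum).hasFPowerSeriesAt
  have hcont : ∀ᶠ z in 𝓝[≠] 0, ContinuousAt f z :=
    nhdsWithin_le_nhds <| hp.analyticAt.eventually_continuousAt.mono fun z hz => by
      convert hz.sub continuous_conj.continuousAt using 1
      ext
      simp
  have hO : (fun z => f z - (z - conj z + a n * z ^ n)) =O[𝓝 0] fun z => ‖z‖ ^ (n + 1) :=
    (hp.isBigO_sub_id_add_leading ha0 ha1 hn2 hmin).congr_left fun z => by ring
  refine ⟨fun hb => ?_, fun hb => ?_⟩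
  · refine hasIndex_of_eventually_re_div_pos 1 1
      ((hcont.and (eventually_re_mul_conj_pos hnodd hn2 hb hO)).mono fun z hz => ?_)
    simpa using ⟨hz.1, re_div_pos_of_re_mul_conj_pos hz.2⟩
  · refine hasIndex_of_eventually_re_div_pos (-1) (-1)
      ((hcont.and (eventually_re_mul_self_neg hnodd hn2 hb hO)).mono fun z hz => ?_)
    simpa [div_neg] using hz

theorem index_singular_odd_case (a : ℕ → ℂ) (f : ℂ → ℂ) (R : ℝ) (hR : 0 < R)
    (ha0 : a 0 = 0) (ha1 : a 1 = 1)
    (hsum : ∀ z : ℂ, ‖z‖ < R →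
      HasSum (fun k : ℕ => a k * z ^ k) (f z + (starRingEnd ℂ) z))
    (hiso : ∀ᶠ z in nhdsWithin 0 {(0 : ℂ)}ᶜ, f z ≠ 0)
    (n : ℕ) (hn2 : 2 ≤ n) (han : a n ≠ 0)
    (hmin : ∀ m : ℕ, 2 ≤ m → m < n → a m = 0)
    (hnodd : Odd n) :
    (0 < (a n).re → HasIndex f 0 1) ∧ ((a n).re < 0 → HasIndex f 0 (-1)) :=
  index_singular_odd_case_general a f R hR ha0 ha1 hsum n hn2 hmin hnodd
end

section
/- Let g(z) = a z^n + z − conj(z) with a ≠ 0, n ≥ 2, and 0 < c < 1. If Re(a) ≠ 0, then for all sufficiently small ρ > 0 and all z with |z| = ρ, one has |g(z)| > c |Re(a)| ρ^n. If Re(a) = 0, then for all sufficiently small ρ > 0 and all z with |z| = ρ, one has |g(z)| > c (n/2) |a|² ρ^{2n−1}. -/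
/-!
Write `z = x + iy`, `ρ = |z|`, so that `g z = a z^n + 2iy`.

If `Re a ≠ 0`: either `|y| > |a| ρ^n` and then `|Im g z| ≥ 2|y| - |a| ρ^n > |a| ρ^n`, or
`z^n = x^n + O(ρ^(n-1) |y|)` and `|x| ≥ ρ - |y|` give `|Re g z| ≥ |Re a| ρ^n - O(ρ^(2n-1))`.

If `a = ib`: `Re g z = -b Im z^n` and `Im g z = b Re z^n + 2y`. Unless `|Im g z|` already exceeds
the bound, `y = O(ρ^n)`, and the second order expansion `z^n = x^n + n x^(n-1) iy + O(ρ^(n-2) y^2)`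
turns `Im g z ≈ 0` into `y ≈ -b x^n / 2`; hence `Im z^n ≈ -(n/2) b x^(2n-1)` and
`|Re g z| = (n/2) b^2 ρ^(2n-1) + O(ρ^(3n-2))`.
-/

open Complex ComplexConjugate Filter Topology

section PowerEstimates

variable {R : Type*} [NormedCommRing R] [NormOneClass R] {z w : R} {ρ : ℝ}

theorem norm_pow_le_pow_of_norm_le (hz : ‖z‖ ≤ ρ) (n : ℕ) : ‖z ^ n‖ ≤ ρ ^ n :=
  (norm_pow_le z n).trans (pow_le_pow_left₀ (norm_nonneg z) hz n)

theorem norm_pow_sub_pow_le (hz : ‖z‖ ≤ ρ) (hw : ‖w‖ ≤ ρ) (n : ℕ) :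
    ‖z ^ n - w ^ n‖ ≤ n * ρ ^ (n - 1) * ‖z - w‖ := by
  rw [← geom_sum₂_mul]
  refine (norm_mul_le _ _).trans (mul_le_mul_of_nonneg_right ?_ (norm_nonneg _))
  calc ‖∑ i ∈ Finset.range n, z ^ i * w ^ (n - 1 - i)‖
      ≤ ∑ i ∈ Finset.range n, ‖z ^ i * w ^ (n - 1 - i)‖ := norm_sum_le _ _
    _ ≤ ∑ _i ∈ Finset.range n, ρ ^ (n - 1) := Finset.sum_le_sum fun i hi => by
        calc ‖z ^ i * w ^ (n - 1 - i)‖ ≤ ρ ^ i * ρ ^ (n - 1 - i) :=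
              (norm_mul_le _ _).trans (mul_le_mul (norm_pow_le_pow_of_norm_le hz i)
                (norm_pow_le_pow_of_norm_le hw _) (norm_nonneg _)
                (pow_nonneg ((norm_nonneg z).trans hz) _))
          _ = ρ ^ (n - 1) := by rw [← pow_add]; congr 1; have := Finset.mem_range.1 hi; omega
    _ = n * ρ ^ (n - 1) := by simp

theorem norm_pow_sub_pow_sub_mul_le (hz : ‖z‖ ≤ ρ) (hw : ‖w‖ ≤ ρ) (n : ℕ) :
    ‖z ^ (n + 2) - w ^ (n + 2) - (n + 2) * w ^ (n + 1) * (z - w)‖ ≤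
      (n + 2).choose 2 * ρ ^ n * ‖z - w‖ ^ 2 := by
  have hρ : 0 ≤ ρ := (norm_nonneg z).trans hz
  induction n with
  | zero =>
    simp only [Nat.cast_zero, zero_add, pow_one, pow_zero, mul_one, Nat.choose_self, Nat.cast_one,
      one_mul]
    rw [show z ^ 2 - w ^ 2 - 2 * w * (z - w) = (z - w) ^ 2 by ring]
    exact norm_pow_le _ _
  | succ n ih =>
    have key : z ^ (n + 3) - w ^ (n + 3) - (↑(n + 1) + 2) * w ^ (n + 2) * (z - w) =
        z * (z ^ (n + 2) - w ^ (n + 2) - (n + 2) * w ^ (n + 1) * (z - w)) +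
          (n + 2) * w ^ (n + 1) * (z - w) ^ 2 := by push_cast; ring
    have hchoose : ((n + 3).choose 2 : ℝ) = (n + 2).choose 2 + (n + 2) := by
      rw [Nat.choose_succ_succ', Nat.choose_one_right]; push_cast; ring
    rw [key, hchoose]
    calc _ ≤ ‖z‖ * ‖z ^ (n + 2) - w ^ (n + 2) - (n + 2) * w ^ (n + 1) * (z - w)‖ +
          ‖((n : R) + 2)‖ * ‖w‖ ^ (n + 1) * ‖z - w‖ ^ 2 := by
          refine (norm_add_le _ _).trans (add_le_add (norm_mul_le _ _) ?_)
          refine (norm_mul_le _ _).trans ?_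
          gcongr
          · exact (norm_mul_le _ _).trans (by gcongr; exact norm_pow_le _ _)
          · exact norm_pow_le _ _
      _ ≤ ρ * ((n + 2).choose 2 * ρ ^ n * ‖z - w‖ ^ 2) + (n + 2) * ρ ^ (n + 1) * ‖z - w‖ ^ 2 := by
          gcongr
          simpa using Nat.norm_cast_le (α := R) (n + 2)
      _ = _ := by ring

end PowerEstimates

/-- With `p`, `q` the real and imaginary parts of `z ^ (k + 1)`, `x + iy = z` and `a = ib`, the
quantity `b * p + 2 * y` is `Im g z`. -/
theorem abs_mul_abs_pow_le_of_abs_sub_le {b x y p q T : ℝ} {k : ℕ}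
    (hp : |p - x ^ (k + 1)| ≤ T) (hq : |q - (k + 1) * x ^ k * y| ≤ T) :
    |b| * (k + 1) * |x| ^ (2 * k + 1) ≤
      2 * |q| + (k + 1) * |x| ^ k * (|b * p + 2 * y| + |b| * T) + 2 * T := by
  have key : b * (k + 1) * x ^ (2 * k + 1) =
      (k + 1) * x ^ k * ((b * p + 2 * y) - b * (p - x ^ (k + 1))) +
        2 * (q - (k + 1) * x ^ k * y) - 2 * q := by ring
  have h1 : |(k + 1) * x ^ k * ((b * p + 2 * y) - b * (p - x ^ (k + 1)))| ≤
      (k + 1) * |x| ^ k * (|b * p + 2 * y| + |b| * T) := by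
    rw [abs_mul, abs_mul, abs_pow, abs_of_pos (by positivity : (0 : ℝ) < k + 1)]
    gcongr
    exact (abs_sub _ _).trans (by rw [abs_mul]; gcongr)
  have h2 : |2 * (q - (k + 1) * x ^ k * y)| ≤ 2 * T := by rw [abs_mul, abs_two]; linarith
  have h3 := abs_sub ((k + 1) * x ^ k * ((b * p + 2 * y) - b * (p - x ^ (k + 1))) +
    2 * (q - (k + 1) * x ^ k * y)) (2 * q)
  have h4 := abs_add_le ((k + 1) * x ^ k * ((b * p + 2 * y) - b * (p - x ^ (k + 1))))
    (2 * (q - (k + 1) * x ^ k * y))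
  rw [abs_mul 2 q, abs_two, ← key, abs_mul, abs_mul, abs_pow,
    abs_of_pos (by positivity : (0 : ℝ) < k + 1)] at h3
  linarith

namespace Complex

theorem re_add_sub_conj (u z : ℂ) : (u + z - conj z).re = u.re := by simp

theorem im_add_sub_conj (u z : ℂ) : (u + z - conj z).im = u.im + 2 * z.im := by
  simp only [sub_im, add_im, conj_im, sub_neg_eq_add]; ring

theorem norm_eq_abs_im_of_re_eq_zero {a : ℂ} (ha : a.re = 0) : ‖a‖ = |a.im| := by
  conv_lhs => rw [← re_add_im a, ha]
  simp

theorem sub_ofReal_re (z : ℂ) : z - z.re = z.im * I := by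
  rw [sub_eq_iff_eq_add', re_add_im]

theorem norm_sub_ofReal_re (z : ℂ) : ‖z - z.re‖ = |z.im| := by
  rw [sub_ofReal_re, norm_mul, norm_I, mul_one, norm_real, Real.norm_eq_abs]

theorem norm_pow_sub_ofReal_re_pow_le (z : ℂ) (n : ℕ) :
    ‖z ^ n - (z.re : ℂ) ^ n‖ ≤ n * ‖z‖ ^ (n - 1) * |z.im| := by
  have hre : ‖(z.re : ℂ)‖ ≤ ‖z‖ := by simpa using abs_re_le_norm z
  simpa [norm_sub_ofReal_re] using norm_pow_sub_pow_le le_rfl hre n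

theorem norm_pow_sub_abs_re_pow_le (z : ℂ) (n : ℕ) :
    ‖z‖ ^ n - |z.re| ^ n ≤ n * ‖z‖ ^ (n - 1) * |z.im| := by
  have hre : ‖|z.re|‖ ≤ ‖z‖ := by simpa using abs_re_le_norm z
  have hgap : ‖‖z‖ - |z.re|‖ ≤ |z.im| := by
    rw [Real.norm_eq_abs, abs_of_nonneg (sub_nonneg.2 (abs_re_le_norm z))]
    linarith [norm_le_abs_re_add_abs_im z]
  calc ‖z‖ ^ n - |z.re| ^ n ≤ ‖‖z‖ ^ n - |z.re| ^ n‖ := Real.le_norm_self _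
    _ ≤ n * ‖z‖ ^ (n - 1) * ‖‖z‖ - |z.re|‖ := norm_pow_sub_pow_le (by simp) hre n
    _ ≤ n * ‖z‖ ^ (n - 1) * |z.im| := by gcongr

theorem abs_re_pow_sub_le_and_abs_im_pow_sub_le (z : ℂ) (n : ℕ) :
    |(z ^ (n + 2)).re - z.re ^ (n + 2)| ≤ (n + 2).choose 2 * ‖z‖ ^ n * z.im ^ 2 ∧
      |(z ^ (n + 2)).im - (n + 2) * z.re ^ (n + 1) * z.im| ≤
        (n + 2).choose 2 * ‖z‖ ^ n * z.im ^ 2 := by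
  have hre : ‖(z.re : ℂ)‖ ≤ ‖z‖ := by simpa using abs_re_le_norm z
  have htaylor := norm_pow_sub_pow_sub_mul_le le_rfl hre n
  rw [norm_sub_ofReal_re, sq_abs, sub_ofReal_re] at htaylor
  constructor
  · refine le_trans (le_of_eq ?_) ((abs_re_le_norm _).trans htaylor)
    simp [← ofReal_pow]
  · refine le_trans (le_of_eq ?_) ((abs_im_le_norm _).trans htaylor)
    simp [← ofReal_pow]

theorem abs_re_mul_pow_sub_le_norm (a z : ℂ) (n : ℕ) :
    |a.re| * ‖z‖ ^ n - 2 * n * ‖a‖ ^ 2 * ‖z‖ ^ (n - 1) * ‖z‖ ^ n ≤ ‖a * z ^ n + z - conj z‖ := by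
  have hre : |a.re| ≤ ‖a‖ := abs_re_le_norm a
  have hdef : 0 ≤ 2 * n * ‖a‖ ^ 2 * ‖z‖ ^ (n - 1) * ‖z‖ ^ n := by positivity
  rcases le_or_gt |z.im| (‖a‖ * ‖z‖ ^ n) with hy | hy
  · have happrox : |a.re * z.re ^ n - (a * z ^ n).re| ≤ ‖a‖ * (n * ‖z‖ ^ (n - 1) * |z.im|) := by
      calc |a.re * z.re ^ n - (a * z ^ n).re| = |(a * ((z.re : ℂ) ^ n - z ^ n)).re| := by
            simp [mul_sub, ← ofReal_pow]
        _ ≤ ‖a * ((z.re : ℂ) ^ n - z ^ n)‖ := abs_re_le_norm _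
        _ ≤ ‖a‖ * (n * ‖z‖ ^ (n - 1) * |z.im|) := by
            rw [norm_mul, norm_sub_rev]; gcongr; exact norm_pow_sub_ofReal_re_pow_le z n
    have hmain := abs_sub_abs_le_abs_sub (a.re * z.re ^ n) (a * z ^ n).re
    rw [abs_mul, abs_pow] at hmain
    have hx := mul_le_mul_of_nonneg_left (norm_pow_sub_abs_re_pow_le z n) (abs_nonneg a.re)
    have h1 := mul_le_mul_of_nonneg_right hre
      (by positivity : (0 : ℝ) ≤ n * ‖z‖ ^ (n - 1) * |z.im|)
    have h2 := mul_le_mul_of_nonneg_left hy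
      (by positivity : (0 : ℝ) ≤ 2 * ‖a‖ * n * ‖z‖ ^ (n - 1))
    calc _ ≤ |(a * z ^ n).re| := by nlinarith
      _ ≤ _ := re_add_sub_conj (a * z ^ n) z ▸ abs_re_le_norm _
  · have him := abs_sub_abs_le_abs_sub (2 * z.im) (-(a * z ^ n).im)
    have hazn : |(a * z ^ n).im| ≤ ‖a‖ * ‖z‖ ^ n := by
      simpa using abs_im_le_norm (a * z ^ n)
    have h1 := mul_le_mul_of_nonneg_right hre (by positivity : (0 : ℝ) ≤ ‖z‖ ^ n)
    rw [abs_neg, abs_mul, abs_two, sub_neg_eq_add, add_comm] at him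
    calc _ ≤ |(a * z ^ n).im + 2 * z.im| := by linarith
      _ ≤ _ := im_add_sub_conj (a * z ^ n) z ▸ abs_im_le_norm _

theorem abs_im_le_of_abs_im_add_sub_conj_le (a z : ℂ) (n : ℕ)
    (him : |(a * z ^ n + z - conj z).im| ≤ ‖a‖ * ‖z‖ ^ n) : |z.im| ≤ ‖a‖ * ‖z‖ ^ n := by
  rw [im_add_sub_conj] at him
  have hazn : |(a * z ^ n).im| ≤ ‖a‖ * ‖z‖ ^ n := by
    simpa using abs_im_le_norm (a * z ^ n)
  have := abs_sub_abs_le_abs_sub (2 * z.im) (-(a * z ^ n).im)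
  rw [abs_neg, abs_mul, abs_two, sub_neg_eq_add, add_comm] at this
  linarith

theorem sub_le_two_mul_abs_im_pow {z : ℂ} {b : ℝ} {n : ℕ}
    (hsmall : (n + 2) * |b| * ‖z‖ ^ (n + 1) ≤ 2) (hy : |z.im| ≤ |b| * ‖z‖ ^ (n + 2)) :
    |b| * (n + 2) * ‖z‖ ^ (2 * n + 3) - (n + 2) * (4 * n + 5) * b ^ 2 * ‖z‖ ^ (3 * n + 4) -
        (n + 2) * ‖z‖ ^ (n + 1) * |b * (z ^ (n + 2)).re + 2 * z.im| ≤
      2 * |(z ^ (n + 2)).im| := by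
  set ρ := ‖z‖
  set T := ((n + 2).choose 2 : ℝ) * ρ ^ n * z.im ^ 2 with hT
  obtain ⟨hp, hq⟩ := abs_re_pow_sub_le_and_abs_im_pow_sub_le z n
  have hN : ((n + 1 : ℕ) : ℝ) + 1 = n + 2 := by push_cast; ring
  have hcore := abs_mul_abs_pow_le_of_abs_sub_le (b := b) (k := n + 1) hp (by rwa [hN])
  rw [hN, show 2 * (n + 1) + 1 = 2 * n + 3 by ring, mul_add] at hcore
  have hx : |z.re| ≤ ρ := abs_re_le_norm z
  have hTle : T ≤ (n + 2) * (n + 1) / 2 * b ^ 2 * ρ ^ (3 * n + 4) := by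
    have hy2 : z.im ^ 2 ≤ (|b| * ρ ^ (n + 2)) ^ 2 := by
      rw [← sq_abs]; exact pow_le_pow_left₀ (abs_nonneg _) hy 2
    calc T ≤ ((n + 2).choose 2 : ℝ) * ρ ^ n * (|b| * ρ ^ (n + 2)) ^ 2 := by rw [hT]; gcongr
      _ = _ := by rw [Nat.cast_choose_two, mul_pow, sq_abs]; push_cast; ring
  have hxlow : ρ ^ (2 * n + 3) - (2 * n + 3) * ρ ^ (2 * n + 2) * |z.im| ≤ |z.re| ^ (2 * n + 3) := by
    have := norm_pow_sub_abs_re_pow_le z (2 * n + 3)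
    push_cast at this
    linarith
  have hsT : (n + 2) * |z.re| ^ (n + 1) * (|b| * T) ≤ 2 * T := by
    have : (n + 2) * |z.re| ^ (n + 1) * |b| ≤ 2 :=
      calc (n + 2) * |z.re| ^ (n + 1) * |b| ≤ (n + 2) * ρ ^ (n + 1) * |b| := by gcongr
        _ ≤ 2 := by linarith
    have hT0 : 0 ≤ T := by positivity
    nlinarith
  have hsIm : (n + 2) * |z.re| ^ (n + 1) * |b * (z ^ (n + 2)).re + 2 * z.im| ≤
      (n + 2) * ρ ^ (n + 1) * |b * (z ^ (n + 2)).re + 2 * z.im| := by gcongr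
  have hyterm : |b| * ρ ^ (2 * n + 2) * |z.im| ≤ b ^ 2 * ρ ^ (3 * n + 4) := by
    calc |b| * ρ ^ (2 * n + 2) * |z.im| ≤ |b| * ρ ^ (2 * n + 2) * (|b| * ρ ^ (n + 2)) := by gcongr
      _ = _ := by rw [← sq_abs b]; ring
  have h1 := mul_le_mul_of_nonneg_left hxlow (by positivity : (0 : ℝ) ≤ |b| * (n + 2))
  have h2 := mul_le_mul_of_nonneg_left hyterm (by positivity : (0 : ℝ) ≤ (n + 2) * (2 * n + 3))
  linarith

theorem sub_le_abs_re_of_re_eq_zero {a z : ℂ} (ha : a.re = 0) {n : ℕ}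
    (hsmall : (n + 2) * ‖a‖ * ‖z‖ ^ (n + 1) ≤ 2)
    (him : |(a * z ^ (n + 2) + z - conj z).im| ≤ (n + 2) / 2 * ‖a‖ ^ 2 * ‖z‖ ^ (2 * n + 3)) :
    (n + 2) / 2 * ‖a‖ ^ 2 * ‖z‖ ^ (2 * n + 3) - 3 * (n + 2) ^ 2 * ‖a‖ ^ 3 * ‖z‖ ^ (3 * n + 4) ≤
      |(a * z ^ (n + 2) + z - conj z).re| := by
  have hA := norm_eq_abs_im_of_re_eq_zero ha
  have hgre : |(a * z ^ (n + 2) + z - conj z).re| = ‖a‖ * |(z ^ (n + 2)).im| := by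
    rw [re_add_sub_conj, mul_re, ha, zero_mul, zero_sub, abs_neg, abs_mul, hA]
  have hgim : (a * z ^ (n + 2) + z - conj z).im = a.im * (z ^ (n + 2)).re + 2 * z.im := by
    rw [im_add_sub_conj, mul_im, ha, zero_mul, zero_add]
  have hLle : (n + 2) / 2 * ‖a‖ ^ 2 * ‖z‖ ^ (2 * n + 3) ≤ ‖a‖ * ‖z‖ ^ (n + 2) := by
    rw [show (n + 2) / 2 * ‖a‖ ^ 2 * ‖z‖ ^ (2 * n + 3) =
      ((n + 2) * ‖a‖ * ‖z‖ ^ (n + 1) / 2) * (‖a‖ * ‖z‖ ^ (n + 2)) by ring]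
    exact mul_le_of_le_one_left (by positivity) (by linarith)
  have hy := abs_im_le_of_abs_im_add_sub_conj_le a z _ (him.trans hLle)
  rw [hA] at hsmall hy
  have hq := sub_le_two_mul_abs_im_pow hsmall hy
  rw [← hgim, ← hA, ← sq_abs, ← hA] at hq
  have hIm := mul_le_mul_of_nonneg_left him
    (by positivity : (0 : ℝ) ≤ (n + 2) * ‖z‖ ^ (n + 1) * ‖a‖)
  rw [show (n + 2) * ‖z‖ ^ (n + 1) * ‖a‖ * ((n + 2) / 2 * ‖a‖ ^ 2 * ‖z‖ ^ (2 * n + 3)) =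
    (n + 2) ^ 2 / 2 * ‖a‖ ^ 3 * ‖z‖ ^ (3 * n + 4) by ring] at hIm
  have h3 := mul_le_mul_of_nonneg_left hq (norm_nonneg a)
  have hslack : 0 ≤ (n + 2) * (3 * n + 12) * ‖a‖ ^ 3 * ‖z‖ ^ (3 * n + 4) := by positivity
  rw [hgre]
  linarith

end Complex

theorem exists_forall_of_eventually_nhdsGT_zero {P : ℝ → Prop} (h : ∀ᶠ ρ in 𝓝[>] 0, P ρ) :
    ∃ ρ0 > (0 : ℝ), ∀ ρ, 0 < ρ → ρ < ρ0 → P ρ := by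
  obtain ⟨u, hu, hsub⟩ := mem_nhdsGT_iff_exists_Ioo_subset.1 h
  exact ⟨u, hu, fun ρ h0 h1 => hsub ⟨h0, h1⟩⟩

theorem eventually_mul_pow_lt {k : ℕ} (hk : k ≠ 0) (K : ℝ) {ε : ℝ} (hε : 0 < ε) :
    ∀ᶠ ρ in 𝓝[>] (0 : ℝ), K * ρ ^ k < ε := by
  have : Tendsto (fun ρ : ℝ => K * ρ ^ k) (𝓝 0) (𝓝 0) := by
    simpa [zero_pow hk] using ((continuous_pow k).const_mul K).tendsto 0
  exact (this.eventually (gt_mem_nhds hε)).filter_mono nhdsWithin_le_nhds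

theorem eventually_mul_abs_re_mul_pow_lt_norm {a : ℂ} (hre : a.re ≠ 0) {n : ℕ} (hn : 2 ≤ n)
    {c : ℝ} (hc1 : c < 1) :
    ∀ᶠ ρ in 𝓝[>] 0, ∀ z : ℂ, ‖z‖ = ρ → c * |a.re| * ρ ^ n < ‖a * z ^ n + z - conj z‖ := by
  have hε : 0 < (1 - c) * |a.re| := mul_pos (by linarith) (abs_pos.2 hre)
  filter_upwards [self_mem_nhdsWithin,
    eventually_mul_pow_lt (k := n - 1) (by omega) (2 * n * ‖a‖ ^ 2) hε] with ρ hρ hsmall z hz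
  have hρn : 0 < ρ ^ n := pow_pos hρ n
  calc c * |a.re| * ρ ^ n < |a.re| * ρ ^ n - 2 * n * ‖a‖ ^ 2 * ρ ^ (n - 1) * ρ ^ n := by
        nlinarith
    _ ≤ _ := hz ▸ Complex.abs_re_mul_pow_sub_le_norm a z n

theorem eventually_mul_norm_sq_mul_pow_lt_norm {a : ℂ} (ha : a ≠ 0) (hre : a.re = 0) (n : ℕ)
    {c : ℝ} (hc1 : c < 1) :
    ∀ᶠ ρ in 𝓝[>] 0, ∀ z : ℂ, ‖z‖ = ρ →
      c * ((n + 2) / 2 * ‖a‖ ^ 2 * ρ ^ (2 * n + 3)) < ‖a * z ^ (n + 2) + z - conj z‖ := by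
  have hA : 0 < ‖a‖ := norm_pos_iff.2 ha
  filter_upwards [self_mem_nhdsWithin,
    eventually_mul_pow_lt (k := n + 1) (by omega) ((n + 2) * ‖a‖) two_pos,
    eventually_mul_pow_lt (k := n + 1) (by omega) (3 * (n + 2) ^ 2 * ‖a‖ ^ 3)
      (by positivity : 0 < (1 - c) * ((n + 2) / 2 * ‖a‖ ^ 2))] with ρ hρ hsmall herr z hz
  subst hz
  have herr' : 3 * (n + 2) ^ 2 * ‖a‖ ^ 3 * ‖z‖ ^ (3 * n + 4) <
      (1 - c) * ((n + 2) / 2 * ‖a‖ ^ 2 * ‖z‖ ^ (2 * n + 3)) := by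
    calc _ = 3 * (n + 2) ^ 2 * ‖a‖ ^ 3 * ‖z‖ ^ (n + 1) * ‖z‖ ^ (2 * n + 3) := by ring
      _ < _ := mul_lt_mul_of_pos_right herr (pow_pos hρ (2 * n + 3))
      _ = _ := by ring
  have hL0 : 0 ≤ (n + 2) / 2 * ‖a‖ ^ 2 * ‖z‖ ^ (2 * n + 3) := by positivity
  rcases le_or_gt |(a * z ^ (n + 2) + z - conj z).im|
    (c * ((n + 2) / 2 * ‖a‖ ^ 2 * ‖z‖ ^ (2 * n + 3))) with him | him
  · have hbound := Complex.sub_le_abs_re_of_re_eq_zero hre hsmall.le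
      (him.trans (mul_le_of_le_one_left hL0 hc1.le))
    calc _ < (n + 2) / 2 * ‖a‖ ^ 2 * ‖z‖ ^ (2 * n + 3) -
          3 * (n + 2) ^ 2 * ‖a‖ ^ 3 * ‖z‖ ^ (3 * n + 4) := by linarith
      _ ≤ _ := hbound
      _ ≤ _ := abs_re_le_norm _
  · exact him.trans_le (abs_im_le_norm _)

theorem lower_bound_g_general (a : ℂ) (ha : a ≠ 0) (n : ℕ) (hn : 2 ≤ n)
    (c : ℝ) (hc1 : c < 1)
    (g : ℂ → ℂ) (hg : ∀ z, g z = a * z ^ n + z - (starRingEnd ℂ) z) :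
    (a.re ≠ 0 → ∃ ρ0 > (0 : ℝ), ∀ ρ : ℝ, 0 < ρ → ρ < ρ0 → ∀ z : ℂ, ‖z‖ = ρ →
      c * |a.re| * ρ ^ n < ‖g z‖) ∧
    (a.re = 0 → ∃ ρ0 > (0 : ℝ), ∀ ρ : ℝ, 0 < ρ → ρ < ρ0 → ∀ z : ℂ, ‖z‖ = ρ →
      c * ((n : ℝ) / 2) * ‖a‖ ^ 2 * ρ ^ (2 * n - 1) < ‖g z‖) := by
  obtain rfl : g = fun z => a * z ^ n + z - conj z := funext hg
  refine ⟨fun hre => exists_forall_of_eventually_nhdsGT_zero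
    (eventually_mul_abs_re_mul_pow_lt_norm hre hn hc1), fun hre => ?_⟩
  obtain ⟨m, rfl⟩ : ∃ m, n = m + 2 := ⟨n - 2, by omega⟩
  refine exists_forall_of_eventually_nhdsGT_zero ?_
  filter_upwards [eventually_mul_norm_sq_mul_pow_lt_norm ha hre m hc1] with ρ hbound z hz
  rw [show 2 * (m + 2) - 1 = 2 * m + 3 by omega]
  push_cast
  linarith [hbound z hz]

theorem lower_bound_g (a : ℂ) (ha : a ≠ 0) (n : ℕ) (hn : 2 ≤ n)
    (c : ℝ) (hc0 : 0 < c) (hc1 : c < 1)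
    (g : ℂ → ℂ) (hg : ∀ z, g z = a * z ^ n + z - (starRingEnd ℂ) z) :
    (a.re ≠ 0 → ∃ ρ0 > (0 : ℝ), ∀ ρ : ℝ, 0 < ρ → ρ < ρ0 → ∀ z : ℂ, ‖z‖ = ρ →
      c * |a.re| * ρ ^ n < ‖g z‖) ∧
    (a.re = 0 → ∃ ρ0 > (0 : ℝ), ∀ ρ : ℝ, 0 < ρ → ρ < ρ0 → ∀ z : ℂ, ‖z‖ = ρ →
      c * ((n : ℝ) / 2) * ‖a‖ ^ 2 * ρ ^ (2 * n - 1) < ‖g z‖) :=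
  lower_bound_g_general a ha n hn c hc1 g hg
end

section
/- Let n ≥ 2 and let a, b ∈ ℂ be nonzero with the same argument (i.e., b = t·a for some t > 0). Then g(z) = a z^n + z − conj(z) and g̃(z) = b z^n + z − conj(z) have the same Poincaré index at the origin. -/
open Complex Set

/-! With `s = t ^ (1 / (n - 1)) > 0` one has `g̃ z = s⁻¹ * g (s * z)`. A positive factor does
not change the argument of `g`, and rescaling the variable only rescales the circles along
which the winding is measured, so the index at `0` is unchanged. -/

section Winding

variable {f : ℂ → ℂ} {z0 : ℂ} {r c : ℝ} {m : ℤ}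

theorem windingOn_ofReal_mul (hc : 0 < c) :
    WindingOn (fun z => (c : ℂ) * f z) z0 r m ↔ WindingOn f z0 r m := by
  have polar_iff : ∀ w e : ℂ, (c : ℂ) * w = (‖(c : ℂ) * w‖ : ℂ) * e ↔ w = (‖w‖ : ℂ) * e := by
    intro w e
    rw [norm_mul, Complex.norm_of_nonneg hc.le, ofReal_mul, mul_assoc]
    exact mul_right_inj' (ofReal_ne_zero.mpr hc.ne')
  simp only [WindingOn, polar_iff]

theorem windingOn_comp_homothety :
    WindingOn (fun z => f (z0 + c * (z - z0))) z0 r m ↔ WindingOn f z0 (c * r) m := by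
  have point_eq : ∀ τ : ℝ, z0 + (c : ℂ) * (z0 + r * exp (I * τ) - z0) =
      z0 + ((c * r : ℝ) : ℂ) * exp (I * τ) := by
    intro τ
    push_cast
    ring
  simp only [WindingOn, point_eq]

theorem hasIndex_ofReal_mul (hc : 0 < c) :
    HasIndex (fun z => (c : ℂ) * f z) z0 m ↔ HasIndex f z0 m := by
  simp only [HasIndex, windingOn_ofReal_mul hc]

theorem hasIndex_comp_homothety (hc : 0 < c) :
    HasIndex (fun z => f (z0 + c * (z - z0))) z0 m ↔ HasIndex f z0 m := by
  simp only [HasIndex, windingOn_comp_homothety]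
  constructor
  · rintro ⟨r0, hr0, H⟩
    refine ⟨c * r0, by positivity, fun r hr hrr0 => ?_⟩
    have hr_eq : r = c * (r / c) := by field_simp
    rw [hr_eq]
    exact H (r / c) (by positivity) (by rwa [div_lt_iff₀' hc])
  · rintro ⟨r0, hr0, H⟩
    refine ⟨r0 / c, by positivity, fun r hr hrr0 => ?_⟩
    exact H (c * r) (by positivity) (by rwa [← lt_div_iff₀' hc])

end Winding

theorem ofReal_inv_mul_conjPoly_comp_mul (a z : ℂ) {s : ℝ} (hs : s ≠ 0) (k : ℕ) :
    ((s⁻¹ : ℝ) : ℂ) * (a * (s * z) ^ (k + 1) + s * z - (starRingEnd ℂ) (s * z)) =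
      ((s ^ k : ℝ) : ℂ) * a * z ^ (k + 1) + z - (starRingEnd ℂ) z := by
  have hsC : (s : ℂ) ≠ 0 := ofReal_ne_zero.mpr hs
  rw [map_mul, conj_ofReal]
  push_cast
  field_simp
  ring

theorem index_same_ray_general (n : ℕ) (hn : 2 ≤ n) (a b : ℂ)
    (hray : ∃ t : ℝ, 0 < t ∧ b = (t : ℂ) * a)
    (g gt : ℂ → ℂ)
    (hg : ∀ z, g z = a * z ^ n + z - (starRingEnd ℂ) z)
    (hgt : ∀ z, gt z = b * z ^ n + z - (starRingEnd ℂ) z) :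
    ∀ m : ℤ, HasIndex g 0 m ↔ HasIndex gt 0 m := by
  intro m
  obtain ⟨t, ht, rfl⟩ := hray
  obtain ⟨k, rfl⟩ : ∃ k, n = k + 2 := ⟨n - 2, by omega⟩
  set s : ℝ := t ^ ((k + 1 : ℕ)⁻¹ : ℝ)
  have hs : 0 < s := Real.rpow_pos_of_pos ht _
  have hsk : s ^ (k + 1) = t := Real.rpow_inv_natCast_pow ht.le k.succ_ne_zero
  have gt_eq : gt = fun z => ((s⁻¹ : ℝ) : ℂ) * g (0 + s * (z - 0)) := by
    funext z
    rw [hgt, hg, ← hsk, zero_add, sub_zero, ofReal_inv_mul_conjPoly_comp_mul a z hs.ne']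
  rw [gt_eq, hasIndex_ofReal_mul (inv_pos.mpr hs), hasIndex_comp_homothety hs]

theorem index_same_ray (n : ℕ) (hn : 2 ≤ n) (a b : ℂ) (ha : a ≠ 0) (hb : b ≠ 0)
    (hray : ∃ t : ℝ, 0 < t ∧ b = (t : ℂ) * a)
    (g gt : ℂ → ℂ)
    (hg : ∀ z, g z = a * z ^ n + z - (starRingEnd ℂ) z)
    (hgt : ∀ z, gt z = b * z ^ n + z - (starRingEnd ℂ) z) :
    ∀ m : ℤ, HasIndex g 0 m ↔ HasIndex gt 0 m :=
  index_same_ray_general n hn a b hray g gt hg hgt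
end

section
/- Let n ≥ 2 and a ∈ ℂ with Re(a) ≠ 0. Then g(z) = a z^n + z − conj(z) and g̃(z) = sign(Re(a)) z^n + z − conj(z) have the same Poincaré index at the origin. -/
open Complex Set

/-!
Write `H_c = harmonicField n c`. At a zero of `H_c` with `‖z‖ = r`, `c z ^ n = -2i Im z`
is purely imaginary of size `‖c‖ r ^ n`; so for small `r` the point `z` is nearly real and
`Re (c z ^ n) ≈ Re c (Re z) ^ n` has size about `|Re c| (r / 2) ^ n`, a contradiction when
`Re c ≠ 0`. This is uniform for `c` in a compact set off the imaginary axis, such as the segment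
from `a` to `sign (Re a)`. Since `H_c` is affine in `c`, a point of a small circle where
`H_a / H_b` is a nonpositive real would be a zero of some `H_c` with `c ∈ [a, b]`. Hence on small
circles `H_a / H_b` stays in the slit plane, its principal argument is continuous there, and the
windings of `H_a` and `H_b` agree.
-/

open Filter Topology Metric ComplexConjugate

lemma norm_pow_sub_pow_le_s16 {R : Type*} [SeminormedCommRing R] [NormOneClass R] (n : ℕ)
    {x y : R} {C : ℝ} (hx : ‖x‖ ≤ C) (hy : ‖y‖ ≤ C) :
    ‖x ^ n - y ^ n‖ ≤ n * C ^ (n - 1) * ‖x - y‖ := by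
  have hC : 0 ≤ C := (norm_nonneg x).trans hx
  have hsum : ‖∑ i ∈ Finset.range n, x ^ i * y ^ (n - 1 - i)‖ ≤ n * C ^ (n - 1) := calc
    _ ≤ ∑ i ∈ Finset.range n, ‖x ^ i * y ^ (n - 1 - i)‖ := norm_sum_le _ _
    _ ≤ ∑ i ∈ Finset.range n, C ^ (n - 1) := by
      refine Finset.sum_le_sum fun i hi => ?_
      have hi : i + (n - 1 - i) = n - 1 := by have := Finset.mem_range.mp hi; omega
      calc ‖x ^ i * y ^ (n - 1 - i)‖ ≤ ‖x‖ ^ i * ‖y‖ ^ (n - 1 - i) :=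
            (norm_mul_le _ _).trans (mul_le_mul (norm_pow_le _ _) (norm_pow_le _ _)
              (norm_nonneg _) (by positivity))
        _ ≤ C ^ i * C ^ (n - 1 - i) := by gcongr
        _ = C ^ (n - 1) := by rw [← pow_add, hi]
    _ = n * C ^ (n - 1) := by simp
  rw [← geom_sum₂_mul]
  exact (norm_mul_le _ _).trans (by gcongr)

lemma isCompact_segment {E : Type*} [AddCommGroup E] [Module ℝ E] [TopologicalSpace E]
    [IsTopologicalAddGroup E] [ContinuousSMul ℝ E] (a b : E) : IsCompact (segment ℝ a b) :=
  convexHull_pair (𝕜 := ℝ) a b ▸ (Set.toFinite {a, b}).isCompact_convexHull ℝ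

lemma hasIndex_iff_eventually {f : ℂ → ℂ} {z0 : ℂ} {m : ℤ} :
    HasIndex f z0 m ↔ ∀ᶠ r in 𝓝[>] 0, WindingOn f z0 r m := by
  simp only [HasIndex, Filter.Eventually, mem_nhdsGT_iff_exists_Ioo_subset, subset_def, mem_Ioo,
    mem_Ioi, and_imp, gt_iff_lt]
  rfl

lemma eq_norm_mul_exp_sub_arg {q w : ℂ} {θ : ℝ} (hq : q ≠ 0)
    (h : q * w = ‖q * w‖ * exp (I * θ)) : w = ‖w‖ * exp (I * (θ - q.arg : ℝ)) := by
  have hpolar : (‖q‖ : ℂ) * exp (q.arg * I) = q := norm_mul_exp_arg_mul_I q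
  have hnorm : (‖q‖ : ℂ) ≠ 0 := by exact_mod_cast norm_ne_zero_iff.mpr hq
  rw [norm_mul, ofReal_mul] at h
  rw [ofReal_sub, mul_sub, exp_sub, mul_div_assoc', eq_div_iff (exp_ne_zero _)]
  apply mul_left_cancel₀ hnorm
  calc (‖q‖ : ℂ) * (w * exp (I * q.arg)) = ‖q‖ * exp (q.arg * I) * w := by rw [mul_comm I]; ring
    _ = q * w := by rw [hpolar]
    _ = _ := by rw [h]; ring

lemma WindingOn.of_div_mem_slitPlane {f h : ℂ → ℂ} {z0 : ℂ} {r : ℝ} {m : ℤ} (hr : 0 ≤ r)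
    (hf : ContinuousOn f (sphere z0 r)) (hh : ContinuousOn h (sphere z0 r))
    (hslit : ∀ z ∈ sphere z0 r, f z / h z ∈ slitPlane) (hwind : WindingOn f z0 r m) :
    WindingOn h z0 r m := by
  obtain ⟨θ, hθ, hpolar, hθ_end⟩ := hwind
  set p : ℝ → ℂ := fun t => z0 + r * exp (I * t)
  have hp : Continuous p := by fun_prop
  have hp_mem : ∀ t, p t ∈ sphere z0 r := fun t => by
    simp [p, norm_exp, abs_of_nonneg hr]
  set q : ℝ → ℂ := fun t => f (p t) / h (p t)
  have hq_slit : ∀ t, q t ∈ slitPlane := fun t => hslit _ (hp_mem t)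
  have hh_ne : ∀ t, h (p t) ≠ 0 := fun t hzero =>
    slitPlane_ne_zero (hq_slit t) (by simp [q, hzero])
  have hq : Continuous q :=
    (hf.comp_continuous hp hp_mem).div (hh.comp_continuous hp hp_mem) hh_ne
  refine ⟨fun t => θ t - (q t).arg, hθ.sub (Continuous.continuousOn ?_), fun t ht => ?_, ?_⟩
  · exact continuous_iff_continuousAt.2 fun t =>
      (continuousAt_arg (hq_slit t)).comp hq.continuousAt
  · refine eq_norm_mul_exp_sub_arg (slitPlane_ne_zero (hq_slit t)) ?_
    rw [div_mul_cancel₀ _ (hh_ne t)]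
    exact hpolar t ht
  · have hp_period : p (2 * Real.pi) = p 0 := by
      simp only [p, ofReal_mul, ofReal_ofNat, ofReal_zero, mul_zero, exp_zero]
      rw [show I * (2 * Real.pi) = 2 * Real.pi * I by ring, exp_two_pi_mul_I]
    simp only [q, hp_period]
    linarith

def harmonicField (n : ℕ) (c z : ℂ) : ℂ := c * z ^ n + z - conj z

lemma continuous_harmonicField (n : ℕ) (c : ℂ) : Continuous (harmonicField n c) := by
  unfold harmonicField; fun_prop

lemma harmonicField_add_smul {n : ℕ} {s t : ℝ} (hst : s + t = 1) (a b z : ℂ) :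
    harmonicField n (s • a + t • b) z = s • harmonicField n a z + t • harmonicField n b z := by
  have hst' : (s : ℂ) + t = 1 := by exact_mod_cast hst
  simp only [harmonicField, real_smul]
  linear_combination (conj z - z) * hst'

lemma exists_mem_segment_harmonicField_eq_zero {n : ℕ} {a b z : ℂ}
    (hslit : harmonicField n a z / harmonicField n b z ∉ slitPlane) :
    ∃ c ∈ segment ℝ a b, harmonicField n c z = 0 := by
  by_cases hb : harmonicField n b z = 0
  · exact ⟨b, right_mem_segment ℝ a b, hb⟩
  set w := harmonicField n a z / harmonicField n b z
  obtain ⟨hw_re, hw_im⟩ : w.re ≤ 0 ∧ w.im = 0 := by simpa [mem_slitPlane_iff] using hslit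
  have hw : w = w.re := ext (by simp) (by simp [hw_im])
  have ha : harmonicField n a z = w.re * harmonicField n b z := by
    rw [← hw]; exact (div_mul_cancel₀ _ hb).symm
  have hpos : 0 < 1 - w.re := by linarith
  -- `H_a - w H_b = 0`, normalised to a convex combination since `w ≤ 0`
  refine ⟨(1 - w.re)⁻¹ • a + (-w.re / (1 - w.re)) • b,
    ⟨_, _, by positivity, div_nonneg (neg_nonneg.2 hw_re) hpos.le, by field_simp; ring, rfl⟩, ?_⟩
  rw [harmonicField_add_smul (by field_simp; ring), ha]
  simp only [real_smul]
  push_cast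
  field_simp
  ring

lemma two_mul_abs_re_le_of_harmonicField_eq_zero {n : ℕ} {c z : ℂ} (hz : z ≠ 0)
    (hsmall : ‖c‖ * ‖z‖ ^ n ≤ ‖z‖) (hzero : harmonicField n c z = 0) :
    2 * |c.re| ≤ 2 ^ n * n * ‖c‖ ^ 2 * ‖z‖ ^ (n - 1) := by
  set r := ‖z‖
  have hcz : c * z ^ n = -((2 * z.im : ℝ) * I) := by
    rw [← sub_conj]; unfold harmonicField at hzero; linear_combination hzero
  have him : 2 * |z.im| = ‖c‖ * r ^ n := by
    have := congrArg norm hcz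
    rw [norm_mul, norm_pow, norm_neg, norm_mul, norm_real, norm_I, Real.norm_eq_abs] at this
    simpa [abs_mul] using this.symm
  have hre : r / 2 ≤ |z.re| := by
    have him_le : 2 * |z.im| ≤ r := him ▸ hsmall
    rw [← sq_le_sq₀ (by positivity) (abs_nonneg _), sq_abs, ← sq_norm_sub_sq_im]
    nlinarith [sq_abs z.im, abs_nonneg z.im]
  have hre_pow : |c.re| * |z.re| ^ n ≤ ‖c‖ * (n * r ^ (n - 1) * |z.im|) := by
    have hdist : ‖(z.re : ℂ) - z‖ = |z.im| := by
      rw [← norm_neg, neg_sub, show z - z.re = z.im * I by nth_rw 1 [← re_add_im z]; ring]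
      simp
    have hcz_re : (c * z ^ n).re = 0 := by rw [hcz]; simp
    calc |c.re| * |z.re| ^ n = |(c * ((z.re : ℂ) ^ n - z ^ n)).re| := by
          rw [mul_sub, sub_re, hcz_re, sub_zero, ← ofReal_pow, re_mul_ofReal, abs_mul, abs_pow]
      _ ≤ ‖c‖ * ‖(z.re : ℂ) ^ n - z ^ n‖ := (abs_re_le_norm _).trans (norm_mul_le _ _)
      _ ≤ ‖c‖ * (n * r ^ (n - 1) * |z.im|) := by
          gcongr
          exact hdist ▸ norm_pow_sub_pow_le_s16 n (by simpa using abs_re_le_norm z) le_rfl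
  have hscaled : 2 * |c.re| * (r / 2) ^ n ≤ 2 ^ n * n * ‖c‖ ^ 2 * r ^ (n - 1) * (r / 2) ^ n := calc
    2 * |c.re| * (r / 2) ^ n ≤ 2 * (|c.re| * |z.re| ^ n) := by
      rw [mul_assoc]; gcongr
    _ ≤ 2 * (‖c‖ * (n * r ^ (n - 1) * |z.im|)) := by gcongr
    _ = n * ‖c‖ * r ^ (n - 1) * (2 * |z.im|) := by ring
    _ = 2 ^ n * n * ‖c‖ ^ 2 * r ^ (n - 1) * (r / 2) ^ n := by
      rw [him, div_pow]; field_simp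
  exact le_of_mul_le_mul_right hscaled (pow_pos (half_pos (norm_pos_iff.2 hz)) n)

lemma eventually_harmonicField_ne_zero {n : ℕ} (hn : 2 ≤ n) {ε M : ℝ} (hε : 0 < ε) :
    ∀ᶠ r in 𝓝[>] 0, ∀ c : ℂ, ε ≤ |c.re| → ‖c‖ ≤ M →
      ∀ z ∈ sphere (0 : ℂ) r, harmonicField n c z ≠ 0 := by
  have hpow : Tendsto (fun r : ℝ => r ^ (n - 1)) (𝓝[>] 0) (𝓝 0) := by
    have : Tendsto (fun r : ℝ => r ^ (n - 1)) (𝓝[>] 0) (𝓝 (0 ^ (n - 1))) :=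
      ((continuous_pow (n - 1)).tendsto 0).mono_left nhdsWithin_le_nhds
    rwa [zero_pow (by omega)] at this
  have hsmall : ∀ᶠ r in 𝓝[>] 0, M * r ^ (n - 1) < 1 :=
    (hpow.const_mul M).eventually_lt_const (by simp)
  have hbound : ∀ᶠ r in 𝓝[>] 0, 2 ^ n * n * M ^ 2 * r ^ (n - 1) < 2 * ε :=
    (hpow.const_mul _).eventually_lt_const (by simpa using hε)
  filter_upwards [hsmall, hbound, self_mem_nhdsWithin]
    with r hsmall hbound (hr : 0 < r) c hc_re hc z hz hzero
  rw [mem_sphere_zero_iff_norm] at hz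
  have hpow_succ : r ^ n = r ^ (n - 1) * r := (pow_sub_one_mul (by omega : n ≠ 0) r).symm
  have hc_small : ‖c‖ * ‖z‖ ^ n ≤ ‖z‖ := by
    rw [hz, hpow_succ, ← mul_assoc]
    refine mul_le_of_le_one_left (le_of_lt hr) ?_
    exact (mul_le_mul_of_nonneg_right hc (by positivity)).trans hsmall.le
  have hre_bound := two_mul_abs_re_le_of_harmonicField_eq_zero (norm_pos_iff.1 (hz ▸ hr))
    hc_small hzero
  rw [hz] at hre_bound
  have : 2 * ε ≤ 2 ^ n * n * M ^ 2 * r ^ (n - 1) := calc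
    2 * ε ≤ 2 * |c.re| := by gcongr
    _ ≤ 2 ^ n * n * ‖c‖ ^ 2 * r ^ (n - 1) := hre_bound
    _ ≤ 2 ^ n * n * M ^ 2 * r ^ (n - 1) := by gcongr
  linarith

lemma eventually_forall_mem_harmonicField_ne_zero {n : ℕ} (hn : 2 ≤ n) {K : Set ℂ}
    (hK : IsCompact K) (hK_re : ∀ c ∈ K, c.re ≠ 0) :
    ∀ᶠ r in 𝓝[>] 0, ∀ c ∈ K, ∀ z ∈ sphere (0 : ℂ) r, harmonicField n c z ≠ 0 := by
  rcases K.eq_empty_or_nonempty with rfl | hne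
  · simp
  obtain ⟨c₀, hc₀, hmin⟩ := hK.exists_isMinOn hne continuous_re.abs.continuousOn
  obtain ⟨M, hM⟩ := hK.isBounded.exists_norm_le
  filter_upwards [eventually_harmonicField_ne_zero hn (abs_pos.2 (hK_re c₀ hc₀))] with r hr c hc
  exact hr c (hmin hc) (hM c hc)

lemma re_ne_zero_of_mem_segment {a b c : ℂ} (hab : 0 < a.re * b.re) (hc : c ∈ segment ℝ a b) :
    c.re ≠ 0 := by
  rcases mul_pos_iff.1 hab with ⟨ha, hb⟩ | ⟨ha, hb⟩
  · exact ((convex_halfSpace_re_gt 0).segment_subset ha hb hc).ne'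
  · exact ((convex_halfSpace_re_lt 0).segment_subset ha hb hc).ne

lemma HasIndex.harmonicField_of_re_mul_pos {n : ℕ} (hn : 2 ≤ n) {a b : ℂ} (hab : 0 < a.re * b.re)
    {m : ℤ} (h : HasIndex (harmonicField n a) 0 m) : HasIndex (harmonicField n b) 0 m := by
  rw [hasIndex_iff_eventually] at h ⊢
  filter_upwards [h, self_mem_nhdsWithin, eventually_forall_mem_harmonicField_ne_zero hn
    (isCompact_segment a b) fun c => re_ne_zero_of_mem_segment hab] with r hwind hr hne
  refine hwind.of_div_mem_slitPlane (le_of_lt hr) (continuous_harmonicField n a).continuousOn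
    (continuous_harmonicField n b).continuousOn fun z hz => ?_
  by_contra hslit
  obtain ⟨c, hc, hzero⟩ := exists_mem_segment_harmonicField_eq_zero hslit
  exact hne c hc z hz hzero

theorem index_halfplane (n : ℕ) (hn : 2 ≤ n) (a : ℂ) (hre : a.re ≠ 0)
    (g gt : ℂ → ℂ)
    (hg : ∀ z, g z = a * z ^ n + z - (starRingEnd ℂ) z)
    (hgt : ∀ z, gt z = (Real.sign a.re : ℂ) * z ^ n + z - (starRingEnd ℂ) z) :
    ∀ m : ℤ, HasIndex g 0 m ↔ HasIndex gt 0 m := by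
  obtain rfl : g = harmonicField n a := funext hg
  obtain rfl : gt = harmonicField n (Real.sign a.re) := funext hgt
  have hsign : 0 < a.re * (Real.sign a.re : ℂ).re := by
    rw [ofReal_re, mul_comm]; exact Real.sign_mul_pos_of_ne_zero _ hre
  exact fun m => ⟨HasIndex.harmonicField_of_re_mul_pos hn hsign,
    HasIndex.harmonicField_of_re_mul_pos hn (mul_comm a.re _ ▸ hsign)⟩
end

section
/- Let n ≥ 2 and a ∈ ℂ with Re(a) ≠ 0. Then g(z) = a z^{n+2} + z − conj(z) and g̃(z) = a z^n + z − conj(z) have the same Poincaré index at the origin. -/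
open Complex Set

/-! On small circles around `0`, the straight-line homotopy
`(1 - s) g + s g̃ = a z^n ((1 - s) z^2 + s) + (z - z̄)` has no zero. Where
`2 |Im z| > ‖a‖ |z|^n`, the term `z - z̄` dominates. Elsewhere `z` is so close to the real axis
that `z^n` and `z^(n+2)` lie near `±|z|^n` and `±|z|^(n+2)` with the same sign, so `Re (a z^n)`
and `Re (a z^(n+2))` both have the sign of `± Re a`, and the real part of the homotopy does not
vanish. Hence `g / g̃` stays in the slit plane, and adding `arg (g / g̃)` to a continuous argument
of `g̃` gives one of `g` with the same total change. -/

open Metric Filter Topology ComplexConjugate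

theorem norm_pow_sub_pow_le_of_norm_le_one {R : Type*} [NormedRing R] [NormOneClass R]
    {u v : R} (hu : ‖u‖ ≤ 1) (hv : ‖v‖ ≤ 1) (k : ℕ) :
    ‖u ^ k - v ^ k‖ ≤ k * ‖u - v‖ := by
  induction k with
  | zero => simp
  | succ k ih =>
    have hsplit : u ^ (k + 1) - v ^ (k + 1) = u ^ k * (u - v) + (u ^ k - v ^ k) * v := by
      noncomm_ring
    calc ‖u ^ (k + 1) - v ^ (k + 1)‖
        ≤ ‖u ^ k‖ * ‖u - v‖ + ‖u ^ k - v ^ k‖ * ‖v‖ := by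
          rw [hsplit]
          exact (norm_add_le _ _).trans (add_le_add (norm_mul_le _ _) (norm_mul_le _ _))
      _ ≤ 1 * ‖u - v‖ + k * ‖u - v‖ * 1 := by
          gcongr
          exact (norm_pow_le _ _).trans (pow_le_one₀ (norm_nonneg _) hu)
      _ = (k + 1 : ℕ) * ‖u - v‖ := by push_cast; ring

theorem mul_pos_of_abs_sub_lt_abs {x y c : ℝ} (hx : |x - c| < |c|) (hy : |y - c| < |c|) :
    0 < x * y := by
  rcases abs_cases c with ⟨hc, -⟩ | ⟨hc, -⟩ <;>
  · rw [hc, abs_lt] at hx hy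
    nlinarith

theorem notMem_segment_of_norm_lt {E : Type*} [SeminormedAddCommGroup E] [NormedSpace ℝ E]
    {x y w : E} (hx : ‖x‖ < ‖w‖) (hy : ‖y‖ < ‖w‖) : w ∉ segment ℝ x y := fun hw =>
  (mem_ball_zero_iff.1 <| (convex_ball 0 ‖w‖).segment_subset
    (mem_ball_zero_iff.2 hx) (mem_ball_zero_iff.2 hy) hw).false

namespace Complex

theorem exists_abs_eq_one_norm_sub_le {u : ℂ} (hu : ‖u‖ = 1) :
    ∃ σ : ℝ, |σ| = 1 ∧ ‖u - σ‖ ≤ 2 * |u.im| := by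
  have hsq : u.re ^ 2 + u.im ^ 2 = 1 := by
    rw [← normSq_add_mul_I u.re u.im, re_add_im, ← Complex.sq_norm, hu, one_pow]
  have him : u.im ^ 2 ≤ |u.im| := by
    rw [← sq_abs]; nlinarith [abs_nonneg u.im, sq_abs u.im, sq_nonneg u.re]
  obtain ⟨σ, hσ, hre⟩ : ∃ σ : ℝ, |σ| = 1 ∧ |u.re - σ| ≤ u.im ^ 2 := by
    rcases le_total 0 u.re with h | h
    · exact ⟨1, abs_one, abs_le.2 ⟨by nlinarith, by nlinarith⟩⟩
    · exact ⟨-1, by simp, abs_le.2 ⟨by nlinarith, by nlinarith⟩⟩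
  refine ⟨σ, hσ, ?_⟩
  calc ‖u - σ‖ ≤ |(u - σ).re| + |(u - σ).im| := norm_le_abs_re_add_abs_im _
    _ = |u.re - σ| + |u.im| := by simp
    _ ≤ 2 * |u.im| := by linarith

theorem notMem_segment_of_re_mul_re_pos {x y w : ℂ} (hw : w.re = 0)
    (h : 0 < x.re * y.re) : w ∉ segment ℝ x y := by
  rintro ⟨s, t, hs, ht, hst, rfl⟩
  simp only [add_re, smul_re, smul_eq_mul] at hw
  have hx : s * x.re ^ 2 + t * (x.re * y.re) = 0 := by linear_combination x.re * hw
  have ht0 : t = 0 := by nlinarith [mul_nonneg hs (sq_nonneg x.re), mul_nonneg ht h.le]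
  have hx0 : x.re ^ 2 = 0 := by simpa [ht0, show s = 1 by linarith] using hx
  simp_all

open scoped ComplexOrder in
theorem div_mem_slitPlane_of_zero_notMem_segment {u v : ℂ}
    (h : (0 : ℂ) ∉ segment ℝ u v) : u / v ∈ slitPlane := by
  have hv : v ≠ 0 := fun hv => h (hv ▸ right_mem_segment ℝ u v)
  rw [mem_slitPlane_iff_not_le_zero, ← neg_nonneg, RCLike.nonneg_iff_exists_ofReal]
  rintro ⟨t, ht, hut⟩
  have hu : u = -(t * v) := by
    rw [show (t : ℂ) = -(u / v) from hut, neg_mul, neg_neg, div_mul_cancel₀ u hv]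
  refine h ⟨1 / (1 + t), t / (1 + t), by positivity, by positivity, by field_simp, ?_⟩
  rw [hu, real_smul, real_smul]
  push_cast
  field_simp
  ring

theorem re_mul_pow_mul_re_mul_pow_add_two_pos_of_norm_eq_one {a u : ℂ} {σ : ℝ} (n : ℕ)
    (hu : ‖u‖ = 1) (hσ : |σ| = 1) (h : (n + 2) * ‖a‖ * ‖u - σ‖ < |a.re|) :
    0 < (a * u ^ n).re * (a * u ^ (n + 2)).re := by
  have hσ' : ‖(σ : ℂ)‖ = 1 := by rw [norm_real, Real.norm_eq_abs, hσ]
  have hclose (k : ℕ) (hk : k ≤ n + 2) : |(a * u ^ k).re - a.re * σ ^ k| < |a.re| :=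
    calc |(a * u ^ k).re - a.re * σ ^ k| = |(a * (u ^ k - (σ : ℂ) ^ k)).re| := by
          rw [mul_sub, sub_re, ← ofReal_pow, re_mul_ofReal]
      _ ≤ ‖a‖ * (k * ‖u - σ‖) := by
          refine (abs_re_le_norm _).trans ?_
          rw [norm_mul]
          gcongr
          exact norm_pow_sub_pow_le_of_norm_le_one hu.le hσ'.le k
      _ ≤ ‖a‖ * ((n + 2) * ‖u - σ‖) := by gcongr; exact_mod_cast hk
      _ < |a.re| := by linarith
  have hc : |a.re * σ ^ n| = |a.re| := by rw [abs_mul, abs_pow, hσ, one_pow, mul_one]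
  have hσn : σ ^ (n + 2) = σ ^ n := by rw [pow_add, ← sq_abs, hσ]; ring
  refine mul_pos_of_abs_sub_lt_abs (c := a.re * σ ^ n) ?_ ?_ <;> rw [hc]
  · exact hclose n (by omega)
  · rw [← hσn]; exact hclose (n + 2) le_rfl

theorem re_mul_pow_mul_re_mul_pow_add_two_pos {a z : ℂ} (n : ℕ) (hz : z ≠ 0)
    (h : 2 * (n + 2) * ‖a‖ * |z.im| < |a.re| * ‖z‖) :
    0 < (a * z ^ n).re * (a * z ^ (n + 2)).re := by
  have hr : 0 < ‖z‖ := norm_pos_iff.2 hz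
  set u := z / ‖z‖ with hu_def
  have hu : ‖u‖ = 1 := by rw [norm_div, norm_real, norm_norm, div_self hr.ne']
  have hzu : z = ‖z‖ * u := by rw [hu_def, mul_div_cancel₀ _ (ofReal_ne_zero.2 hr.ne')]
  obtain ⟨σ, hσ, hσu⟩ := exists_abs_eq_one_norm_sub_le hu
  have hunit : 0 < (a * u ^ n).re * (a * u ^ (n + 2)).re := by
    refine re_mul_pow_mul_re_mul_pow_add_two_pos_of_norm_eq_one n hu hσ ?_
    calc (n + 2) * ‖a‖ * ‖u - σ‖ ≤ (n + 2) * ‖a‖ * (2 * |u.im|) := by gcongr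
      _ = 2 * (n + 2) * ‖a‖ * |z.im| / ‖z‖ := by
          rw [hu_def, div_ofReal_im, abs_div, abs_norm]; ring
      _ < |a.re| := by rw [div_lt_iff₀ hr]; exact h
  have hscale (k : ℕ) : (a * z ^ k).re = ‖z‖ ^ k * (a * u ^ k).re := by
    rw [hzu, mul_pow, ← ofReal_pow, mul_left_comm, re_ofReal_mul, ← hzu]
  rw [hscale, hscale, mul_mul_mul_comm]
  exact mul_pos (by positivity) hunit

theorem eventually_zero_notMem_segment {n : ℕ} (hn : 2 ≤ n) {a : ℂ} (hre : a.re ≠ 0) :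
    ∀ᶠ z in 𝓝[≠] (0 : ℂ),
      (0 : ℂ) ∉ segment ℝ (a * z ^ (n + 2) + z - conj z) (a * z ^ n + z - conj z) := by
  have ha : 0 < ‖a‖ := norm_pos_iff.2 fun h => hre (by simp [h])
  refine eventually_nhdsWithin_iff.2 <| Metric.eventually_nhds_iff.2
    ⟨min 1 (|a.re| / ((n + 2) * ‖a‖ ^ 2)), by positivity, fun z hzε hz0 => ?_⟩
  rw [dist_zero_right] at hzε
  have hr : 0 < ‖z‖ := norm_pos_iff.2 hz0
  have hr1 : ‖z‖ ≤ 1 := hzε.le.trans (min_le_left _ _)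
  have hra : (n + 2) * ‖a‖ ^ 2 * ‖z‖ < |a.re| := by
    rw [← lt_div_iff₀' (by positivity)]; exact hzε.trans_le (min_le_right _ _)
  have hpow : ‖z‖ ^ (n + 2) ≤ ‖z‖ ^ n := pow_le_pow_of_le_one hr.le hr1 (by omega)
  have hpow2 : ‖z‖ ^ n ≤ ‖z‖ ^ 2 := pow_le_pow_of_le_one hr.le hr1 hn
  have hc : ‖-(z - conj z)‖ = 2 * |z.im| := by
    rw [norm_neg, sub_conj, norm_mul, norm_I, mul_one, norm_real, Real.norm_eq_abs, abs_mul,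
      abs_two]
  rw [add_sub_assoc, add_sub_assoc, ← add_neg_cancel (z - conj z), add_comm (a * z ^ (n + 2)),
    add_comm (a * z ^ n), mem_segment_translate]
  rcases lt_or_ge (‖a‖ * ‖z‖ ^ n) (2 * |z.im|) with hfar | hnear
  · refine notMem_segment_of_norm_lt ?_ ?_ <;> rw [hc, norm_mul, norm_pow]
    · exact lt_of_le_of_lt (by gcongr) hfar
    · exact hfar
  · refine notMem_segment_of_re_mul_re_pos (by simp) ?_
    rw [mul_comm]
    refine re_mul_pow_mul_re_mul_pow_add_two_pos n hz0 ?_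
    calc 2 * (n + 2) * ‖a‖ * |z.im| = (n + 2) * ‖a‖ * (2 * |z.im|) := by ring
      _ ≤ (n + 2) * ‖a‖ * (‖a‖ * ‖z‖ ^ 2) := by
          gcongr (n + 2) * ‖a‖ * ?_
          exact hnear.trans (by gcongr)
      _ = (n + 2) * ‖a‖ ^ 2 * ‖z‖ * ‖z‖ := by ring
      _ < |a.re| * ‖z‖ := by gcongr

end Complex

theorem WindingOn.of_eqOn_mul {f h q : ℂ → ℂ} {z0 : ℂ} {r : ℝ} {m : ℤ}
    (hw : WindingOn h z0 r m) (hq : ContinuousOn q (sphere z0 |r|))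
    (hslit : MapsTo q (sphere z0 |r|) slitPlane) (hf : EqOn f (q * h) (sphere z0 |r|)) :
    WindingOn f z0 r m := by
  obtain ⟨θ, hθc, hθh, hθper⟩ := hw
  set c : ℝ → ℂ := fun t => z0 + r * exp (I * t) with hc
  have hcs (t : ℝ) : c t ∈ sphere z0 |r| := by
    rw [show c t = circleMap z0 r t by simp only [hc, circleMap, mul_comm I]]
    exact circleMap_mem_sphere' z0 r t
  have harg : Continuous fun t => arg (q (c t)) := by
    have hqc : Continuous fun t => q (c t) := hq.comp_continuous (by fun_prop) hcs
    exact continuous_iff_continuousAt.2 fun t =>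
      (continuousAt_arg (hslit (hcs t))).comp (f := fun t => q (c t)) hqc.continuousAt
  refine ⟨fun t => θ t + arg (q (c t)), hθc.add harg.continuousOn, fun t ht => ?_, ?_⟩
  · rw [hf (hcs t), Pi.mul_apply, norm_mul]
    calc q (c t) * h (c t)
        = (‖q (c t)‖ * exp (arg (q (c t)) * I)) * (‖h (c t)‖ * exp (I * θ t)) := by
          rw [norm_mul_exp_arg_mul_I, ← hθh t ht]
      _ = _ := by push_cast; rw [mul_add, exp_add]; ring_nf
  · have hc2π : c (2 * Real.pi) = c 0 := by
      simp only [hc, ofReal_mul, ofReal_ofNat, ofReal_zero, mul_zero, exp_zero]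
      rw [mul_comm I, exp_two_pi_mul_I]
    simp only [hc2π]
    linarith

theorem HasIndex.of_eventually_zero_notMem_segment {f h : ℂ → ℂ} {z0 : ℂ} {m : ℤ}
    (hf : Continuous f) (hh : Continuous h)
    (hseg : ∀ᶠ z in 𝓝[≠] z0, (0 : ℂ) ∉ segment ℝ (f z) (h z)) (hind : HasIndex h z0 m) :
    HasIndex f z0 m := by
  obtain ⟨r0, hr0, hw⟩ := hind
  obtain ⟨r1, hr1, hseg⟩ := Metric.eventually_nhds_iff.1 (eventually_nhdsWithin_iff.1 hseg)
  refine ⟨min r0 r1, lt_min hr0 hr1, fun r hr hrlt => ?_⟩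
  have hsph : ∀ z ∈ sphere z0 |r|, (0 : ℂ) ∉ segment ℝ (f z) (h z) := by
    intro z hz
    rw [mem_sphere, abs_of_pos hr] at hz
    refine hseg (hz.trans_lt (hrlt.trans_le (min_le_right _ _))) ?_
    rintro rfl
    exact hr.ne (by simpa using hz)
  have hh0 : ∀ z ∈ sphere z0 |r|, h z ≠ 0 :=
    fun z hz h0 => hsph z hz (h0 ▸ right_mem_segment ℝ (f z) (h z))
  refine (hw r hr (hrlt.trans_le (min_le_left _ _))).of_eqOn_mul
    (hf.continuousOn.div hh.continuousOn hh0)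
    (fun z hz => div_mem_slitPlane_of_zero_notMem_segment (hsph z hz)) fun z hz => ?_
  simp [div_mul_cancel₀ _ (hh0 z hz)]

theorem hasIndex_iff_of_eventually_zero_notMem_segment {f h : ℂ → ℂ} {z0 : ℂ} {m : ℤ}
    (hf : Continuous f) (hh : Continuous h)
    (hseg : ∀ᶠ z in 𝓝[≠] z0, (0 : ℂ) ∉ segment ℝ (f z) (h z)) :
    HasIndex f z0 m ↔ HasIndex h z0 m :=
  ⟨.of_eventually_zero_notMem_segment hh hf (by simpa only [segment_symm] using hseg),
    .of_eventually_zero_notMem_segment hf hh hseg⟩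

theorem index_power_reduction (n : ℕ) (hn : 2 ≤ n) (a : ℂ) (hre : a.re ≠ 0)
    (g gt : ℂ → ℂ)
    (hg : ∀ z, g z = a * z ^ (n + 2) + z - (starRingEnd ℂ) z)
    (hgt : ∀ z, gt z = a * z ^ n + z - (starRingEnd ℂ) z) :
    ∀ m : ℤ, HasIndex g 0 m ↔ HasIndex gt 0 m := by
  intro m
  have hg_cont : Continuous g := by rw [funext hg]; fun_prop
  have hgt_cont : Continuous gt := by rw [funext hgt]; fun_prop
  refine hasIndex_iff_of_eventually_zero_notMem_segment hg_cont hgt_cont ?_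
  simpa only [hg, hgt] using eventually_zero_notMem_segment hn hre
end

section
/- For n ≥ 2, the nonzero solutions of i z^n + z − conj(z) = 0 are exactly the n−1 points z_k = ρ_k e^{i k π/n}, where k ranges over odd k ∈ {1,…,n−1} and even k ∈ {n+1,…,2n−1}, and ρ_k^{n−1} = (−1)^{k+1} 2 sin(kπ/n). Moreover, each such zero satisfies |h'(z_k)| > 1 where h(z) = i z^n + z, i.e., all nonzero zeros are sense-preserving. -/
/-!
Since `z - conj z = 2 i Im z`, the equation reads `z ^ n = -2 Im z`, so `z ^ n` is real and
`z / |z|` is a `2n`-th root of unity, `z = ρ e^{ikπ/n}` with `k < 2n`. Then `z ^ n = (-1)^k ρ ^ n`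
and `Im z = ρ sin (kπ/n)`, which turns the equation into `ρ^(n-1) = (-1)^(k+1) 2 sin (kπ/n)`;
positivity of the left side forces the parity of `k` to match the sign of `sin (kπ/n)`.
For the derivative, `h'(z) z = i n z ^ n + z = Re z + (1 - 2n) Im z · i`, which is longer than `z`
because `Im z ≠ 0`.
-/

open Complex ComplexConjugate

theorem I_mul_pow_add_sub_conj_eq_zero_iff (n : ℕ) (z : ℂ) :
    I * z ^ n + z - conj z = 0 ↔ z ^ n = ((-(2 * z.im) : ℝ) : ℂ) := by
  rw [add_sub_assoc, sub_conj, ← mul_comm I, ← mul_add, mul_eq_zero, or_iff_right I_ne_zero,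
    add_eq_zero_iff_eq_neg, ofReal_neg]

theorem exp_I_mul_nat_mul_pi_div_pow {n : ℕ} (hn : n ≠ 0) (k : ℕ) :
    exp (I * ((k * Real.pi / n : ℝ) : ℂ)) ^ n = (-1) ^ k := by
  rw [← exp_nat_mul, ← exp_pi_mul_I, ← exp_nat_mul]
  congr 1
  push_cast
  field_simp

theorem im_ofReal_mul_exp_I_mul (ρ θ : ℝ) : ((ρ : ℂ) * exp (I * θ)).im = ρ * Real.sin θ := by
  rw [im_ofReal_mul, mul_comm I, exp_ofReal_mul_I_im]

theorem exists_lt_eq_norm_mul_exp_of_pow_eq_ofReal {n : ℕ} (hn : n ≠ 0) {z : ℂ} (hz : z ≠ 0)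
    {x : ℝ} (hzx : z ^ n = x) :
    ∃ k < 2 * n, z = ‖z‖ * exp (I * ((k * Real.pi / n : ℝ) : ℂ)) := by
  have hnorm : (‖z‖ : ℂ) ≠ 0 := ofReal_ne_zero.2 (norm_ne_zero_iff.2 hz)
  set u := z / ‖z‖ with hu
  have hu_norm : ‖u‖ = 1 := by
    rw [hu, norm_div, norm_real, norm_norm, div_self (norm_ne_zero_iff.2 hz)]
  have hu_pow : u ^ (2 * n) = 1 := by
    have hreal : u ^ n = ((x / ‖z‖ ^ n : ℝ) : ℂ) := by
      rw [hu, div_pow, hzx]; push_cast; rfl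
    have hsq : ‖u ^ n‖ ^ 2 = 1 := by rw [norm_pow, hu_norm, one_pow, one_pow]
    rw [mul_comm, pow_mul, hreal, ← ofReal_pow, ← ofReal_one, ofReal_inj]
    rw [hreal, norm_real, Real.norm_eq_abs, sq_abs] at hsq
    exact hsq
  have : NeZero (2 * n) := ⟨by omega⟩
  obtain ⟨k, hk, hku⟩ := (isPrimitiveRoot_exp (2 * n) (by omega)).eq_pow_of_pow_eq_one hu_pow
  refine ⟨k, hk, ?_⟩
  rw [← exp_nat_mul] at hku
  have hangle : (k : ℂ) * (2 * Real.pi * I / (2 * n : ℕ)) = I * ((k * Real.pi / n : ℝ) : ℂ) := by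
    push_cast; field_simp
  rw [← hangle, hku, hu, mul_div_cancel₀ _ hnorm]

theorem pow_mul_neg_one_pow_eq_iff {ρ s : ℝ} (hρ : 0 < ρ) {n : ℕ} (hn : n ≠ 0) (k : ℕ) :
    ρ ^ n * (-1) ^ k = -(2 * (ρ * s)) ↔ ρ ^ (n - 1) = (-1) ^ (k + 1) * 2 * s := by
  have hsq : ((-1 : ℝ) ^ k) * (-1) ^ k = 1 := by rw [← pow_add, ← two_mul, pow_mul]; norm_num
  rw [← Nat.sub_add_cancel (Nat.one_le_iff_ne_zero.2 hn), pow_succ, Nat.add_sub_cancel, pow_succ]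
  constructor
  · intro h
    have h' : ρ ^ (n - 1) * (-1) ^ k = -(2 * s) := by
      apply mul_left_cancel₀ hρ.ne'; linear_combination h
    linear_combination (-1) ^ k * h' - ρ ^ (n - 1) * hsq
  · intro h
    linear_combination ρ * (-1) ^ k * h - 2 * ρ * s * hsq

theorem I_mul_pow_add_sub_conj_eq_zero_iff_of_polar {n : ℕ} (hn : n ≠ 0) {ρ : ℝ} (hρ : 0 < ρ)
    (k : ℕ) :
    I * (ρ * exp (I * ((k * Real.pi / n : ℝ) : ℂ))) ^ n + ρ * exp (I * ((k * Real.pi / n : ℝ) : ℂ))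
        - conj (ρ * exp (I * ((k * Real.pi / n : ℝ) : ℂ))) = 0 ↔
      ρ ^ (n - 1) = (-1) ^ (k + 1) * 2 * Real.sin (k * Real.pi / n) := by
  rw [I_mul_pow_add_sub_conj_eq_zero_iff, im_ofReal_mul_exp_I_mul, mul_pow,
    exp_I_mul_nat_mul_pi_div_pow hn, ← pow_mul_neg_one_pow_eq_iff hρ hn, ← ofReal_inj]
  norm_cast

theorem Real.sin_nat_mul_pi_div_nonneg {n k : ℕ} (hk : k ≤ n) :
    0 ≤ Real.sin (k * Real.pi / n) := by
  rcases Nat.eq_zero_or_pos n with rfl | hn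
  · simp
  apply Real.sin_nonneg_of_nonneg_of_le_pi (by positivity)
  rw [div_le_iff₀ (by exact_mod_cast hn), mul_comm]
  gcongr

theorem Real.sin_nat_mul_pi_div_nonpos {n k : ℕ} (hnk : n ≤ k) (hk : k ≤ 2 * n) :
    Real.sin (k * Real.pi / n) ≤ 0 := by
  rcases Nat.eq_zero_or_pos n with rfl | hn
  · simp
  have hn' : (0 : ℝ) < n := by exact_mod_cast hn
  rw [← Real.sin_sub_two_pi]
  apply Real.sin_nonpos_of_nonpos_of_neg_pi_le
  · rw [sub_nonpos, div_le_iff₀ hn']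
    have : (k : ℝ) ≤ 2 * n := by exact_mod_cast hk
    nlinarith [Real.pi_pos]
  · rw [le_sub_iff_add_le, le_div_iff₀ hn']
    have : (n : ℝ) ≤ k := by exact_mod_cast hnk
    nlinarith [Real.pi_pos]

theorem index_cases_of_neg_one_pow_mul_sin_pos {n k : ℕ} (hk : k < 2 * n)
    (hpos : 0 < (-1) ^ (k + 1) * 2 * Real.sin (k * Real.pi / n)) :
    (Odd k ∧ 1 ≤ k ∧ k ≤ n - 1) ∨ (Even k ∧ n + 1 ≤ k ∧ k ≤ 2 * n - 1) := by
  rcases lt_trichotomy k n with hkn | rfl | hnk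
  · have hs := Real.sin_nat_mul_pi_div_nonneg hkn.le
    rcases Nat.even_or_odd k with he | ho
    · rw [he.add_one.neg_one_pow] at hpos; linarith
    · exact Or.inl ⟨ho, ho.pos, by omega⟩
  · rw [mul_div_cancel_left₀ _ (Nat.cast_ne_zero.2 (by omega)), Real.sin_pi, mul_zero] at hpos
    exact (lt_irrefl 0 hpos).elim
  · have hs := Real.sin_nat_mul_pi_div_nonpos hnk.le hk.le
    rcases Nat.even_or_odd k with he | ho
    · exact Or.inr ⟨he, hnk, by omega⟩
    · rw [ho.add_one.neg_one_pow] at hpos; linarith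

theorem deriv_I_mul_pow_add_id (n : ℕ) (z : ℂ) :
    deriv (fun w : ℂ => I * w ^ n + w) z = I * (n * z ^ (n - 1)) + 1 :=
  (((hasDerivAt_pow n z).const_mul I).add (hasDerivAt_id z)).deriv

theorem one_lt_norm_I_mul_nat_mul_pow_add_one {n : ℕ} (hn : 2 ≤ n) {z : ℂ} (hz : z ≠ 0)
    (hzn : z ^ n = ((-(2 * z.im) : ℝ) : ℂ)) : 1 < ‖I * (n * z ^ (n - 1)) + 1‖ := by
  have him : z.im ≠ 0 := by
    intro h
    rw [h, mul_zero, neg_zero, ofReal_zero, pow_eq_zero_iff (by omega)] at hzn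
    exact hz hzn
  have hmul : (I * (n * z ^ (n - 1)) + 1) * z = z - ((2 * n * z.im : ℝ) : ℂ) * I := by
    rw [add_mul, mul_assoc, mul_assoc, ← pow_succ, Nat.sub_add_cancel (by omega), hzn]
    push_cast; ring
  have hsq : ‖z‖ ^ 2 < ‖(I * (n * z ^ (n - 1)) + 1) * z‖ ^ 2 := by
    have hn' : (2 : ℝ) ≤ n := by exact_mod_cast hn
    rw [hmul, Complex.sq_norm, Complex.sq_norm, normSq_apply, normSq_apply]
    simp only [sub_re, sub_im, mul_I_re, mul_I_im, ofReal_re, ofReal_im]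
    nlinarith [mul_pos (sq_pos_of_ne_zero him) (show (0 : ℝ) < n * (n - 1) by nlinarith)]
  have hlt := lt_of_pow_lt_pow_left₀ 2 (norm_nonneg _) hsq
  rw [norm_mul] at hlt
  exact (lt_mul_iff_one_lt_left (norm_pos_iff.2 hz)).1 hlt

theorem zeros_of_i_zn (n : ℕ) (hn : 2 ≤ n) :
    ∀ z : ℂ, z ≠ 0 →
      ((Complex.I * z ^ n + z - (starRingEnd ℂ) z = 0 ↔
        ∃ k : ℕ, ((Odd k ∧ 1 ≤ k ∧ k ≤ n - 1) ∨ (Even k ∧ n + 1 ≤ k ∧ k ≤ 2 * n - 1)) ∧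
          ∃ ρ : ℝ, 0 < ρ ∧
            ρ ^ (n - 1) = (-1 : ℝ) ^ (k + 1) * 2 * Real.sin ((k : ℝ) * Real.pi / n) ∧
            z = (ρ : ℂ) * Complex.exp (Complex.I * (((k : ℝ) * Real.pi / n : ℝ) : ℂ))) ∧
      (Complex.I * z ^ n + z - (starRingEnd ℂ) z = 0 →
        1 < ‖deriv (fun w : ℂ => Complex.I * w ^ n + w) z‖)) := by
  intro z hz
  have hn0 : n ≠ 0 := by omega
  refine ⟨⟨fun hzero => ?_, ?_⟩, fun hzero => ?_⟩
  · obtain ⟨k, hk, hz_eq⟩ := exists_lt_eq_norm_mul_exp_of_pow_eq_ofReal hn0 hz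
      ((I_mul_pow_add_sub_conj_eq_zero_iff n z).1 hzero)
    have hρ : 0 < ‖z‖ := norm_pos_iff.2 hz
    rw [hz_eq] at hzero
    have hρk := (I_mul_pow_add_sub_conj_eq_zero_iff_of_polar hn0 hρ k).1 hzero
    exact ⟨k, index_cases_of_neg_one_pow_mul_sin_pos hk (hρk ▸ pow_pos hρ _), ‖z‖, hρ, hρk,
      hz_eq⟩
  · rintro ⟨k, -, ρ, hρ, hρk, rfl⟩
    exact (I_mul_pow_add_sub_conj_eq_zero_iff_of_polar hn0 hρ k).2 hρk
  · rw [deriv_I_mul_pow_add_id]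
    exact one_lt_norm_I_mul_nat_mul_pow_add_one hn hz
      ((I_mul_pow_add_sub_conj_eq_zero_iff n z).1 hzero)
end
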